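/- arXiv:2111.02918 — 8 statements merged into one kernel-verified Lean document; each statement's English description precedes it below -/
import Mathlib

section
/- Let X be a connected metric space and M ≥ 2. Let (A₁, B₁) and (A₂, B₂) be M-egg-yolk pairs such that B₁ ∩ B₂ ≠ ∅ and the closure of A₂ is not contained in A₁. Then diam(A₂) ≥ (1/(M(M+1))) · diam(A₁). -/
/-- An `M`-egg-yolk pair `(A, B(x, r))`: `A` is a bounded open set and `B(x, r)` is an open
ball with `B ⊆ 2B ⊆ A ⊆ MB`. -/
def IsEggYolkPair {X : Type*} [MetricSpace X] (M : ℝ) (A : Set X) (x : X) (r : ℝ) : Prop :=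
  0 < r ∧ IsOpen A ∧ Bornology.IsBounded A ∧
    Metric.ball x (2 * r) ⊆ A ∧ A ⊆ Metric.ball x (M * r)

/-- If `(A₁, B₁)` and `(A₂, B₂)` are `M`-egg-yolk pairs in a connected metric
space with `B₁ ∩ B₂ ≠ ∅` and `closure A₂ ⊄ A₁`, then
`diam A₂ ≥ (1/(M(M+1))) · diam A₁`. -/
theorem stmt_1 {X : Type*} [MetricSpace X] [ConnectedSpace X]
    (M : ℝ) (hM : 2 ≤ M)
    (A₁ A₂ : Set X) (x₁ x₂ : X) (r₁ r₂ : ℝ)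
    (h₁ : IsEggYolkPair M A₁ x₁ r₁) (h₂ : IsEggYolkPair M A₂ x₂ r₂)
    (hB : (Metric.ball x₁ r₁ ∩ Metric.ball x₂ r₂).Nonempty)
    (hcl : ¬ closure A₂ ⊆ A₁) :
    (1 / (M * (M + 1))) * Metric.diam A₁ ≤ Metric.diam A₂ := by
  obtain ⟨hr₁, _, hA₁bdd, hB₁, hA₁M⟩ := h₁
  obtain ⟨hr₂, _, hA₂bdd, hB₂, _⟩ := h₂
  obtain ⟨z, hz₁, hz₂⟩ := hB
  obtain ⟨y, hyA₂, hyA₁⟩ := Set.not_subset.mp hcl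
  -- y ∉ ball x₁ (2r₁)
  have hy : 2 * r₁ ≤ dist x₁ y := by
    by_contra h
    exact hyA₁ (hB₁ (Metric.mem_ball'.mpr (lt_of_not_ge h)))
  have hz : dist x₁ z < r₁ := Metric.mem_ball'.mp hz₁
  have hzy : r₁ ≤ dist z y := by
    have := dist_triangle x₁ z y
    linarith
  have hzA₂ : z ∈ closure A₂ := subset_closure (hB₂ (by
    have := Metric.mem_ball.mp hz₂
    exact Metric.mem_ball.mpr (by linarith)))
  have hd2 : r₁ ≤ Metric.diam A₂ := by
    calc r₁ ≤ dist z y := hzy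
    _ ≤ Metric.diam (closure A₂) := Metric.dist_le_diam_of_mem hA₂bdd.closure hzA₂ hyA₂
    _ = Metric.diam A₂ := Metric.diam_closure _
  have hd1 : Metric.diam A₁ ≤ 2 * (M * r₁) := by
    have := Metric.diam_mono hA₁M Metric.isBounded_ball
    calc Metric.diam A₁ ≤ Metric.diam (Metric.ball x₁ (M * r₁)) := this
    _ ≤ 2 * (M * r₁) := Metric.diam_ball (by nlinarith)
  have hpos : 0 < M * (M + 1) := by nlinarith
  rw [div_mul_eq_mul_div, one_mul, div_le_iff₀ hpos]
  nlinarith [mul_le_mul_of_nonneg_right hd2 hpos.le, mul_pos hr₁ (by nlinarith : (0:ℝ) < M * (M - 1))]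
end

section
/- Let X be a connected metric space, M ≥ 2 and a > 0. Let (A_i, B_i), i ∈ I, be a family of M-egg-yolk pairs, and suppose there exists i₀ ∈ I such that A_i ∩ A_{i₀} ≠ ∅ and diam(A_i) ≤ a · diam(A_{i₀}) for every i ∈ I. Then, setting A_I = ⋃_{i∈I} A_i, the pair (A_I, B_{i₀}) is a ((2a+1)M)-egg-yolk pair. -/
/-- If `(Aᵢ, Bᵢ)`, `i ∈ I`, is a family of `M`-egg-yolk pairs and `i₀ ∈ I`
is such that `Aᵢ ∩ A_{i₀} ≠ ∅` and `diam Aᵢ ≤ a · diam A_{i₀}` for all `i`, then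
`(⋃ i, Aᵢ, B_{i₀})` is a `((2a+1)M)`-egg-yolk pair. -/
theorem stmt_2 {X : Type*} [MetricSpace X] [ConnectedSpace X]
    (M a : ℝ) (hM : 2 ≤ M) (ha : 0 < a)
    {I : Type*} (A : I → Set X) (x : I → X) (r : I → ℝ)
    (h : ∀ i, IsEggYolkPair M (A i) (x i) (r i))
    (i₀ : I) (hint : ∀ i, (A i ∩ A i₀).Nonempty)
    (hdiam : ∀ i, Metric.diam (A i) ≤ a * Metric.diam (A i₀)) :
    IsEggYolkPair ((2 * a + 1) * M) (⋃ i, A i) (x i₀) (r i₀) := by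
  obtain ⟨hr0, hAopen0, hAbdd0, hball0, hsub0⟩ := h i₀
  have hM0 : (0:ℝ) ≤ M := by linarith
  have hsub : (⋃ i, A i) ⊆ Metric.ball (x i₀) ((2 * a + 1) * M * r i₀) := by
    rintro y hy
    simp only [Set.mem_iUnion] at hy
    obtain ⟨i, hyi⟩ := hy
    obtain ⟨z, hzA, hzA0⟩ := hint i
    have h1 : dist y z ≤ Metric.diam (A i) :=
      Metric.dist_le_diam_of_mem (h i).2.2.1 hyi hzA
    have h2 : dist z (x i₀) < M * r i₀ := by
      simpa [Metric.mem_ball] using hsub0 hzA0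
    have h3 : Metric.diam (A i₀) ≤ 2 * (M * r i₀) :=
      Metric.diam_le_of_subset_closedBall (by positivity)
        (hsub0.trans Metric.ball_subset_closedBall)
    have h4 : Metric.diam (A i) ≤ a * (2 * (M * r i₀)) :=
      (hdiam i).trans (by nlinarith)
    have : dist y (x i₀) ≤ dist y z + dist z (x i₀) := dist_triangle _ _ _
    simp only [Metric.mem_ball]
    nlinarith
  exact ⟨hr0, isOpen_iUnion fun i => (h i).2.1, Metric.isBounded_ball.subset hsub,
    hball0.trans (Set.subset_iUnion A i₀), hsub⟩
end

section
/- Let p ≥ 1 and let Γ be a family of rectifiable curves in ℝⁿ with p-modulus zero. Then for each rectifiable path γ: [0, L] → ℝⁿ parametrized by arclength, the set of x ∈ ℝⁿ such that the translated path γ + x belongs to Γ has Lebesgue n-measure zero. -/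
open MeasureTheory Set
open scoped ENNReal

/-- A rectifiable curve in `ℝⁿ`, given by its arclength parametrization on `[0, len]`. -/
structure RectCurve (n : ℕ) where
  len : ℝ
  len_nonneg : 0 ≤ len
  toFun : ℝ → EuclideanSpace ℝ (Fin n)
  arclength : ∀ t ∈ Set.Icc 0 len, eVariationOn toFun (Set.Icc 0 t) = ENNReal.ofReal t

/-- The line integral `∫_γ ρ ds` of a Borel function over a rectifiable curve
(via its arclength parametrization). -/
noncomputable def lineIntegral {n : ℕ} (ρ : EuclideanSpace ℝ (Fin n) → ℝ≥0∞)
    (γ : RectCurve n) : ℝ≥0∞ :=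
  ∫⁻ t in Set.Icc 0 γ.len, ρ (γ.toFun t)

/-- A Borel function `ρ ≥ 0` is admissible for a curve family `Γ` if `∫_γ ρ ds ≥ 1`
for every `γ ∈ Γ`. -/
def Admissible {n : ℕ} (ρ : EuclideanSpace ℝ (Fin n) → ℝ≥0∞) (Γ : Set (RectCurve n)) : Prop :=
  Measurable ρ ∧ ∀ γ ∈ Γ, 1 ≤ lineIntegral ρ γ

/-- The `p`-modulus of a curve family: `inf ∫ ρᵖ` over admissible `ρ`. -/
noncomputable def modulus {n : ℕ} (p : ℝ) (Γ : Set (RectCurve n)) : ℝ≥0∞ :=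
  ⨅ (ρ : EuclideanSpace ℝ (Fin n) → ℝ≥0∞) (_ : Admissible ρ Γ), ∫⁻ x, ρ x ^ p

theorem eVariationOn_add_const {n : ℕ} (f : ℝ → EuclideanSpace ℝ (Fin n))
    (x : EuclideanSpace ℝ (Fin n)) (s : Set ℝ) :
    eVariationOn (fun t => f t + x) s = eVariationOn f s := by
  simp only [eVariationOn, edist_add_right]

/-- The translate `γ + x` of a rectifiable curve. -/
noncomputable def RectCurve.translate {n : ℕ} (γ : RectCurve n)
    (x : EuclideanSpace ℝ (Fin n)) : RectCurve n :=
  ⟨γ.len, γ.len_nonneg, fun t => γ.toFun t + x, fun t ht => by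
    rw [eVariationOn_add_const]; exact γ.arclength t ht⟩

/-!
For an admissible `ρ` and each `x` with `γ + x ∈ Γ`, Hölder's inequality on `[0, L]` gives
`1 ≤ (∫_{γ+x} ρ ds)^p ≤ L^(p-1) ∫_{γ+x} ρ^p ds`. Integrating over `x` and using Tonelli and the
translation invariance of Lebesgue measure, the set of such `x` has measure at most `L^p ∫ ρ^p`,
which can be made arbitrarily small since `Γ` has `p`-modulus zero.
-/

theorem lipschitzOnWith_of_eVariationOn_Icc_eq {E : Type*} [PseudoEMetricSpace E] {f : ℝ → E}
    {L : ℝ} (hf : ∀ t ∈ Icc 0 L, eVariationOn f (Icc 0 t) = ENNReal.ofReal t) :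
    LipschitzOnWith 1 f (Icc 0 L) := by
  have hle : ∀ s ∈ Icc 0 L, ∀ t ∈ Icc 0 L, s ≤ t →
      edist (f s) (f t) ≤ ENNReal.ofReal (t - s) := by
    intro s hs t ht hst
    have hadd := eVariationOn.Icc_add_Icc f (s := univ) hs.1 hst (mem_univ s)
    simp only [univ_inter, hf s hs, hf t ht] at hadd
    rw [ENNReal.ofReal_sub _ hs.1]
    refine ENNReal.le_sub_of_add_le_left ENNReal.ofReal_ne_top ?_
    rw [← hadd]
    gcongr
    exact eVariationOn.edist_le f (left_mem_Icc.2 hst) (right_mem_Icc.2 hst)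
  intro s hs t ht
  rw [ENNReal.coe_one, one_mul, edist_dist, Real.dist_eq]
  rcases le_total s t with hst | hts
  · rw [abs_sub_comm, abs_of_nonneg (sub_nonneg.2 hst)]
    exact hle s hs t ht hst
  · rw [edist_comm, abs_of_nonneg (sub_nonneg.2 hts)]
    exact hle t ht s hs hts

theorem lintegral_rpow_le_measure_univ_rpow_mul {α : Type*} [MeasurableSpace α] {μ : Measure α}
    {p : ℝ} (hp : 1 ≤ p) {f : α → ℝ≥0∞} (hf : AEMeasurable f μ) :
    (∫⁻ a, f a ∂μ) ^ p ≤ μ univ ^ (p - 1) * ∫⁻ a, f a ^ p ∂μ := by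
  have hp0 : 0 < p := by linarith
  have holder := eLpNorm'_le_eLpNorm'_mul_rpow_measure_univ one_pos hp hf.aestronglyMeasurable
  simp only [eLpNorm', enorm_eq_self, ENNReal.rpow_one, div_one] at holder
  calc (∫⁻ a, f a ∂μ) ^ p
      ≤ ((∫⁻ a, f a ^ p ∂μ) ^ (1 / p) * μ univ ^ (1 - 1 / p)) ^ p := by gcongr
    _ = μ univ ^ (p - 1) * ∫⁻ a, f a ^ p ∂μ := by
      rw [ENNReal.mul_rpow_of_nonneg _ _ hp0.le, ← ENNReal.rpow_mul, ← ENNReal.rpow_mul,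
        one_div_mul_cancel hp0.ne', ENNReal.rpow_one, mul_comm, sub_mul, one_mul,
        one_div_mul_cancel hp0.ne']

theorem exists_admissible_lintegral_rpow_lt {n : ℕ} {p : ℝ} {Γ : Set (RectCurve n)} {ε : ℝ≥0∞}
    (h : modulus p Γ < ε) :
    ∃ ρ : EuclideanSpace ℝ (Fin n) → ℝ≥0∞, Admissible ρ Γ ∧ ∫⁻ x, ρ x ^ p < ε := by
  simpa only [modulus, iInf_lt_iff, exists_prop] using h

namespace RectCurve

variable {n : ℕ} (γ : RectCurve n)

theorem lipschitzOnWith : LipschitzOnWith 1 γ.toFun (Icc 0 γ.len) :=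
  lipschitzOnWith_of_eVariationOn_Icc_eq γ.arclength

-- A continuous extension of `γ.toFun` to all of `ℝ` makes `(x, t) ↦ ρ (γ t + x)` jointly
-- measurable, as Tonelli requires.
noncomputable def extend : ℝ → EuclideanSpace ℝ (Fin n) :=
  fun t => γ.toFun (projIcc 0 γ.len γ.len_nonneg t)

theorem continuous_extend : Continuous γ.extend :=
  γ.lipschitzOnWith.continuousOn.comp_continuous (continuous_subtype_val.comp continuous_projIcc)
    fun _ => Subtype.mem _

theorem extend_of_mem {t : ℝ} (ht : t ∈ Icc 0 γ.len) : γ.extend t = γ.toFun t := by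
  simp only [extend, projIcc_of_mem _ ht]

variable {ρ : EuclideanSpace ℝ (Fin n) → ℝ≥0∞}

theorem measurable_extend_add (hρ : Measurable ρ) :
    Measurable fun q : EuclideanSpace ℝ (Fin n) × ℝ => ρ (γ.extend q.2 + q.1) :=
  hρ.comp ((γ.continuous_extend.measurable.comp measurable_snd).add measurable_fst)

theorem lineIntegral_translate (x : EuclideanSpace ℝ (Fin n)) :
    lineIntegral ρ (γ.translate x) = ∫⁻ t in Icc 0 γ.len, ρ (γ.extend t + x) :=
  setLIntegral_congr_fun measurableSet_Icc fun t ht => by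
    simp only [translate, γ.extend_of_mem ht]

theorem measurable_lineIntegral_translate (hρ : Measurable ρ) :
    Measurable fun x => lineIntegral ρ (γ.translate x) := by
  simpa only [lineIntegral_translate] using (γ.measurable_extend_add hρ).lintegral_prod_right'

theorem lintegral_lineIntegral_translate (hρ : Measurable ρ) :
    ∫⁻ x, lineIntegral ρ (γ.translate x) = ENNReal.ofReal γ.len * ∫⁻ y, ρ y := by
  simp only [lineIntegral_translate]
  rw [lintegral_lintegral_swap (γ.measurable_extend_add hρ).aemeasurable]
  simp only [lintegral_add_left_eq_self ρ, setLIntegral_const, Real.volume_Icc, sub_zero,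
    mul_comm]

theorem rpow_lineIntegral_le {p : ℝ} (hp : 1 ≤ p) (hρ : Measurable ρ) :
    lineIntegral ρ γ ^ p ≤
      ENNReal.ofReal γ.len ^ (p - 1) * lineIntegral (fun y => ρ y ^ p) γ := by
  have hmeas : AEMeasurable (fun t => ρ (γ.toFun t)) (volume.restrict (Icc 0 γ.len)) :=
    hρ.comp_aemeasurable (γ.lipschitzOnWith.continuousOn.aemeasurable measurableSet_Icc)
  simpa only [lineIntegral, Measure.restrict_apply_univ, Real.volume_Icc, sub_zero] using
    lintegral_rpow_le_measure_univ_rpow_mul hp hmeas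

end RectCurve

theorem volume_setOf_translate_mem_le {n : ℕ} {p : ℝ} (hp : 1 ≤ p) {Γ : Set (RectCurve n)}
    {ρ : EuclideanSpace ℝ (Fin n) → ℝ≥0∞} (hρ : Admissible ρ Γ) (γ : RectCurve n) :
    volume {x | γ.translate x ∈ Γ} ≤ ENNReal.ofReal γ.len ^ p * ∫⁻ y, ρ y ^ p := by
  obtain ⟨hρm, hρΓ⟩ := hρ
  have hp0 : 0 < p := by linarith
  set L := ENNReal.ofReal γ.len
  calc volume {x | γ.translate x ∈ Γ}
      ≤ volume {x | 1 ≤ lineIntegral ρ (γ.translate x) ^ p} :=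
        measure_mono fun x hx => ENNReal.one_le_rpow (hρΓ _ hx) hp0
    _ ≤ ∫⁻ x, lineIntegral ρ (γ.translate x) ^ p := by
        simpa only [one_mul] using mul_meas_ge_le_lintegral₀
          ((γ.measurable_lineIntegral_translate hρm).pow_const p).aemeasurable 1
    _ ≤ ∫⁻ x, L ^ (p - 1) * lineIntegral (fun y => ρ y ^ p) (γ.translate x) :=
        lintegral_mono fun x => (γ.translate x).rpow_lineIntegral_le hp hρm
    _ = L ^ (p - 1) * L ^ (1 : ℝ) * ∫⁻ y, ρ y ^ p := by
        rw [lintegral_const_mul _ (γ.measurable_lineIntegral_translate (hρm.pow_const p)),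
          γ.lintegral_lineIntegral_translate (hρm.pow_const p), ENNReal.rpow_one, mul_assoc]
    _ = L ^ p * ∫⁻ y, ρ y ^ p := by
        rw [← ENNReal.rpow_add_of_nonneg _ _ (by linarith) zero_le_one, sub_add_cancel]

/-- If `Γ` is a family of rectifiable curves of `p`-modulus zero, then for
each rectifiable path `γ`, the set of `x ∈ ℝⁿ` with `γ + x ∈ Γ` has Lebesgue measure zero. -/
theorem stmt_5 {n : ℕ} (p : ℝ) (hp : 1 ≤ p) (Γ : Set (RectCurve n))
    (hΓ : modulus p Γ = 0) (γ : RectCurve n) :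
    volume {x : EuclideanSpace ℝ (Fin n) | γ.translate x ∈ Γ} = 0 := by
  set C := ENNReal.ofReal γ.len ^ p
  have hC : C ≠ ⊤ := ENNReal.rpow_ne_top_of_nonneg (by linarith) ENNReal.ofReal_ne_top
  refine le_antisymm (ENNReal.le_of_forall_pos_le_add fun ε hε _ => ?_) bot_le
  obtain ⟨ρ, hρ, hsmall⟩ := exists_admissible_lintegral_rpow_lt
    (hΓ.trans_lt (ENNReal.div_pos (ENNReal.coe_ne_zero.2 hε.ne') hC))
  calc volume {x | γ.translate x ∈ Γ} ≤ C * ∫⁻ y, ρ y ^ p :=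
        volume_setOf_translate_mem_le hp hρ γ
    _ ≤ C * (ε / C) := by gcongr
    _ ≤ 0 + ε := by rw [zero_add]; exact ENNReal.mul_div_le
end

section
/- Let E ⊆ ℝⁿ, let γ: [0, L] → ℝⁿ be a non-constant rectifiable path parametrized by arclength, and let N ∈ ℕ. Let F_N be the set of x ∈ ℝⁿ such that E ∩ |γ + x| contains at least N points. Then the outer Lebesgue measure of F_N is at most c(n) · ℓ(γ) · N⁻¹ · H^{n-1}(E), where c(n) depends only on n, ℓ(γ) is the length of γ, and H^{n-1} is the (n-1)-dimensional Hausdorff measure. -/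
open MeasureTheory Set
open scoped ENNReal

/-!
Cover `E` by sets `tᵢ` of diameter at most `r`. The translate `γ + x` meets `tᵢ` iff
`x ∈ tᵢ - |γ|`, and chaining `|γ|` by about `ℓ(γ) / s` balls of radius `s` shows
`vol(tᵢ - |γ|) ≲ ℓ(γ) s^(n-1)` for every `s > diam tᵢ`. If `E ∩ |γ + x|` has `N` points at mutual
distances `> r`, they lie in distinct `tᵢ`, so `x` lies in `N` of the sets `tᵢ - |γ|`, and
Chebyshev's inequality gives `N vol{such x} ≲ ℓ(γ) ∑ diam(tᵢ)^(n-1)`; the infimum over covers is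
`H^{n-1}(E)`. Any `N` distinct points are `1/m`-separated for some `m`, and the bound passes to the
increasing union over `m`.
-/

open Metric
open scoped Pointwise

namespace MeasureTheory

theorem natCast_mul_measure_le_tsum_of_le_encard {X ι : Type*} [MeasurableSpace X] [Countable ι]
    (μ : Measure X) (A : ι → Set X) (N : ℕ) {F : Set X}
    (hF : ∀ x ∈ F, (N : ℕ∞) ≤ {i | x ∈ A i}.encard) :
    N * μ F ≤ ∑' i, μ (A i) := by
  set A' := fun i => toMeasurable μ (A i)
  have hA' : ∀ i, MeasurableSet (A' i) := fun i => measurableSet_toMeasurable μ (A i)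
  set f : X → ℝ≥0∞ := fun x => ∑' i, (A' i).indicator 1 x
  have hf : Measurable f := Measurable.tsum fun i => measurable_one.indicator (hA' i)
  have hFf : F ⊆ {x | (N : ℝ≥0∞) ≤ f x} := by
    intro x hx
    have hcount : f x = {i | x ∈ A' i}.encard := by
      rw [← ENNReal.tsum_set_one, tsum_subtype _ fun _ => (1 : ℝ≥0∞)]
      rfl
    simp only [mem_ofPred_eq, hcount]
    exact_mod_cast (hF x hx).trans
      (encard_le_encard fun i hi => subset_toMeasurable μ (A i) hi)
  calc (N : ℝ≥0∞) * μ F ≤ N * μ {x | (N : ℝ≥0∞) ≤ f x} := by gcongr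
    _ ≤ ∫⁻ x, f x ∂μ := mul_meas_ge_le_lintegral hf _
    _ = ∑' i, μ (A' i) := by
        rw [lintegral_tsum fun i => (measurable_one.indicator (hA' i)).aemeasurable]
        simp only [lintegral_indicator_one (hA' _)]
    _ = ∑' i, μ (A i) := by simp only [A', measure_toMeasurable]

theorem le_mul_hausdorffMeasure_of_forall_cover {X : Type*} [EMetricSpace X] [MeasurableSpace X]
    [BorelSpace X] {d : ℝ} {E : Set X} {a c r : ℝ≥0∞} (hr : 0 < r) (hc₀ : c ≠ 0) (hc : c ≠ ⊤)
    (h : ∀ t : ℕ → Set X, E ⊆ ⋃ i, t i → (∀ i, ediam (t i) ≤ r) →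
      a ≤ c * ∑' i, ⨆ _ : (t i).Nonempty, ediam (t i) ^ d) :
    a ≤ c * μH[d] E := by
  rw [mul_comm, ← ENNReal.div_le_iff hc₀ hc, Measure.hausdorffMeasure_apply]
  refine le_iSup₂_of_le r hr (le_iInf₂ fun t hcov => le_iInf fun hdiam => ?_)
  rw [ENNReal.div_le_iff hc₀ hc, mul_comm]
  exact h t hcov hdiam

end MeasureTheory

namespace RectCurve

variable {n : ℕ} (γ : RectCurve n)

def trace : Set (EuclideanSpace ℝ (Fin n)) := γ.toFun '' Icc 0 γ.len

theorem dist_le_sub {a b : ℝ} (ha : a ∈ Icc 0 γ.len) (hb : b ∈ Icc 0 γ.len) (hab : a ≤ b) :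
    dist (γ.toFun a) (γ.toFun b) ≤ b - a := by
  have hsplit := eVariationOn.Icc_add_Icc γ.toFun (s := univ) ha.1 hab (mem_univ a)
  rw [univ_inter, univ_inter, univ_inter, γ.arclength a ha, γ.arclength b hb,
    ← add_sub_cancel a b, ENNReal.ofReal_add ha.1 (sub_nonneg.2 hab), add_sub_cancel,
    ENNReal.add_right_inj ENNReal.ofReal_ne_top] at hsplit
  have hedist := eVariationOn.edist_le γ.toFun (s := Icc a b) (left_mem_Icc.2 hab)
    (right_mem_Icc.2 hab)
  rwa [hsplit, edist_dist, ENNReal.ofReal_le_ofReal_iff (sub_nonneg.2 hab)] at hedist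

theorem len_eq_zero (γ : RectCurve 0) : γ.len = 0 := by
  have hconst : (γ.toFun '' Icc 0 γ.len).Subsingleton := fun a _ b _ => Subsingleton.elim a b
  have hvar := γ.arclength γ.len ⟨γ.len_nonneg, le_rfl⟩
  rw [eVariationOn.constant_on hconst, eq_comm, ENNReal.ofReal_eq_zero] at hvar
  exact le_antisymm hvar γ.len_nonneg

theorem trace_subset_iUnion_closedBall {s : ℝ} (hs : 0 < s) :
    γ.trace ⊆ ⋃ k ∈ Finset.range (⌊γ.len / s⌋₊ + 1), closedBall (γ.toFun (k * s)) s := by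
  rintro _ ⟨τ, hτ, rfl⟩
  set k := ⌊τ / s⌋₊
  have hks : k * s ≤ τ := (le_div_iff₀ hs).1 (Nat.floor_le (div_nonneg hτ.1 hs.le))
  have hτk : τ < k * s + s := by
    have := (div_lt_iff₀ hs).1 (Nat.lt_floor_add_one (τ / s))
    linarith
  have hk : k ∈ Finset.range (⌊γ.len / s⌋₊ + 1) :=
    Finset.mem_range_succ_iff.2 (Nat.floor_le_floor (by gcongr; exact hτ.2))
  refine mem_iUnion₂.2 ⟨k, hk, ?_⟩
  rw [mem_closedBall, dist_comm]
  have hksIcc : (k : ℝ) * s ∈ Icc 0 γ.len := ⟨by positivity, hks.trans hτ.2⟩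
  linarith [γ.dist_le_sub hksIcc hτ hks]

theorem volume_closedBall_sub_trace_le (p : EuclideanSpace ℝ (Fin n)) {s : ℝ} (hs : 0 < s)
    (hsL : s ≤ 2 * γ.len) :
    volume (closedBall p s - γ.trace) ≤
      ENNReal.ofReal (3 * 2 ^ n * γ.len * s ^ ((n : ℝ) - 1)) *
        volume (ball (0 : EuclideanSpace ℝ (Fin n)) 1) := by
  set K := ⌊γ.len / s⌋₊ + 1
  have hcover : closedBall p s - γ.trace ⊆
      ⋃ k ∈ Finset.range K, closedBall (p - γ.toFun (k * s)) (s + s) := by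
    refine (sub_subset_sub_left (γ.trace_subset_iUnion_closedBall hs)).trans ?_
    simp only [sub_iUnion₂, closedBall_sub_closedBall hs.le hs.le]
    exact subset_rfl
  have hcount : (K : ℝ) * (s + s) ^ n ≤ 3 * 2 ^ n * γ.len * s ^ ((n : ℝ) - 1) := by
    have hK : (K : ℝ) ≤ 3 * (γ.len / s) := by
      have := Nat.floor_le (div_nonneg γ.len_nonneg hs.le)
      have : 1 ≤ 2 * (γ.len / s) := by rw [mul_div_assoc', le_div_iff₀ hs]; linarith
      push_cast [K]
      linarith
    calc (K : ℝ) * (s + s) ^ n ≤ 3 * (γ.len / s) * (2 ^ n * s ^ n) := by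
          rw [← two_mul, mul_pow]; gcongr
      _ = 3 * 2 ^ n * γ.len * s ^ ((n : ℝ) - 1) := by
          rw [Real.rpow_sub_one hs.ne', Real.rpow_natCast]; ring
  calc volume (closedBall p s - γ.trace)
      ≤ ∑ k ∈ Finset.range K, volume (closedBall (p - γ.toFun (k * s)) (s + s)) :=
        (measure_mono hcover).trans (measure_biUnion_finset_le _ _)
    _ = ENNReal.ofReal (K * (s + s) ^ n) * volume (ball (0 : EuclideanSpace ℝ (Fin n)) 1) := by
        simp only [Measure.addHaar_closedBall _ _ (by positivity : 0 ≤ s + s),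
          finrank_euclideanSpace_fin, Finset.sum_const, Finset.card_range, nsmul_eq_mul,
          ENNReal.ofReal_mul (Nat.cast_nonneg _), ENNReal.ofReal_natCast, mul_assoc]
    _ ≤ _ := by gcongr

noncomputable def tubeConstant (n : ℕ) : ℝ≥0∞ :=
  3 * 2 ^ n * volume (ball (0 : EuclideanSpace ℝ (Fin n)) 1)

theorem tubeConstant_pos : 0 < tubeConstant n := by
  have := measure_ball_pos volume (0 : EuclideanSpace ℝ (Fin n)) one_pos
  unfold tubeConstant
  positivity

theorem tubeConstant_ne_top : tubeConstant n ≠ ⊤ := by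
  unfold tubeConstant
  exact ENNReal.mul_ne_top (by finiteness) measure_ball_lt_top.ne

theorem volume_sub_trace_le (hL : 0 < γ.len) {t : Set (EuclideanSpace ℝ (Fin n))}
    (ht : ediam t ≤ ENNReal.ofReal γ.len) :
    volume (t - γ.trace) ≤
      tubeConstant n * ENNReal.ofReal γ.len * ⨆ _ : t.Nonempty, ediam t ^ ((n : ℝ) - 1) := by
  rcases t.eq_empty_or_nonempty with rfl | ⟨p, hp⟩
  · simp
  rw [iSup_pos ⟨p, hp⟩]
  have hd : 0 ≤ (n : ℝ) - 1 := by
    have hn : n ≠ 0 := by rintro rfl; exact hL.ne' γ.len_eq_zero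
    simpa using Nat.one_le_iff_ne_zero.2 hn
  have ht_top : ediam t ≠ ⊤ := (ht.trans_lt ENNReal.ofReal_lt_top).ne
  set B := volume (ball (0 : EuclideanSpace ℝ (Fin n)) 1)
  set f : ℝ → ℝ≥0∞ := fun s => ENNReal.ofReal (3 * 2 ^ n * γ.len * s ^ ((n : ℝ) - 1)) * B
  have hDL : diam t < 2 * γ.len := (ENNReal.toReal_le_of_le_ofReal hL.le ht).trans_lt (by linarith)
  -- `t ⊆ closedBall p s` for every `s > diam t`; let `s` decrease to `diam t`
  have hbound : ∀ s ∈ Ioo (diam t) (2 * γ.len), volume (t - γ.trace) ≤ f s := fun s hs =>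
    (measure_mono (sub_subset_sub_right fun q hq => (dist_le_diam_of_mem' ht_top hq hp).trans
      hs.1.le)).trans (γ.volume_closedBall_sub_trace_le p (diam_nonneg.trans_lt hs.1) hs.2.le)
  have hf : ContinuousAt f (diam t) :=
    ((ENNReal.continuous_mul_const measure_ball_lt_top.ne).comp
      (ENNReal.continuous_ofReal.comp
        (continuous_const.mul (Real.continuous_rpow_const hd)))).continuousAt
  calc volume (t - γ.trace) ≤ f (diam t) :=
        ge_of_tendsto (hf.tendsto.mono_left nhdsWithin_le_nhds)
          (Filter.eventually_of_mem (Ioo_mem_nhdsGT hDL) hbound)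
    _ = tubeConstant n * ENNReal.ofReal γ.len * ediam t ^ ((n : ℝ) - 1) := by
        rw [← ENNReal.ofReal_toReal ht_top]
        simp only [f, tubeConstant,
          ENNReal.ofReal_mul (by positivity : (0 : ℝ) ≤ 3 * 2 ^ n * γ.len),
          ENNReal.ofReal_mul (by positivity : (0 : ℝ) ≤ 3 * 2 ^ n),
          ← ENNReal.ofReal_rpow_of_nonneg ENNReal.toReal_nonneg hd, diam]
        norm_num
        ring

theorem encard_le_encard_setOf_mem_sub_trace {ι : Type*} {t : ι → Set (EuclideanSpace ℝ (Fin n))}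
    {r : ℝ≥0∞} (hdiam : ∀ i, ediam (t i) ≤ r) {x : EuclideanSpace ℝ (Fin n)}
    {S : Set (EuclideanSpace ℝ (Fin n))}
    (hS : S ⊆ (⋃ i, t i) ∩ (fun τ => γ.toFun τ + x) '' Icc 0 γ.len) (hsep : IsSeparated r S) :
    S.encard ≤ {i | x ∈ t i - γ.trace}.encard := by
  obtain rfl | ⟨e₀, he₀⟩ := S.eq_empty_or_nonempty
  · simp
  have : Nonempty ι := (mem_iUnion.1 (hS he₀).1).nonempty
  choose! idx hidx using fun e (he : e ∈ S) => mem_iUnion.1 (hS he).1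
  -- two points of `S` are too far apart to share a piece `t i`
  have hinj : InjOn idx S := by
    intro a ha b hb hab
    by_contra hne
    exact (hsep ha hb hne).not_ge
      ((edist_le_ediam_of_mem (hidx a ha) (hab ▸ hidx b hb)).trans (hdiam _))
  rw [← hinj.encard_image]
  refine encard_le_encard ?_
  rintro _ ⟨e, he, rfl⟩
  obtain ⟨τ, hτ, rfl⟩ := (hS he).2
  exact ⟨_, hidx _ he, γ.toFun τ, mem_image_of_mem _ hτ, add_sub_cancel_left _ _⟩

theorem natCast_mul_volume_le_of_isSeparated (hL : 0 < γ.len)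
    (E : Set (EuclideanSpace ℝ (Fin n))) (N : ℕ) {ε : ℝ≥0∞} (hε : 0 < ε) :
    N * volume {x | ∃ S ⊆ E ∩ (fun τ => γ.toFun τ + x) '' Icc 0 γ.len,
        (N : ℕ∞) ≤ S.encard ∧ IsSeparated ε S} ≤
      tubeConstant n * ENNReal.ofReal γ.len * μH[(n : ℝ) - 1] E := by
  refine le_mul_hausdorffMeasure_of_forall_cover (lt_min (ENNReal.ofReal_pos.2 hL) hε)
    (mul_ne_zero tubeConstant_pos.ne' (ENNReal.ofReal_pos.2 hL).ne')
    (ENNReal.mul_ne_top tubeConstant_ne_top ENNReal.ofReal_ne_top) fun t hcov hdiam => ?_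
  calc _ ≤ ∑' i, volume (t i - γ.trace) := by
        refine natCast_mul_measure_le_tsum_of_le_encard _ _ _ fun x ⟨S, hS, hNS, hsep⟩ => ?_
        exact hNS.trans (γ.encard_le_encard_setOf_mem_sub_trace hdiam
          (hS.trans (inter_subset_inter_left _ hcov)) (hsep.anti (min_le_right _ _)))
    _ ≤ ∑' i, tubeConstant n * ENNReal.ofReal γ.len *
          ⨆ _ : (t i).Nonempty, ediam (t i) ^ ((n : ℝ) - 1) :=
        ENNReal.tsum_le_tsum fun i => γ.volume_sub_trace_le hL ((hdiam i).trans (min_le_left _ _))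
    _ = _ := ENNReal.tsum_mul_left

end RectCurve

/-- There is a constant `C = C(n)` such that for every set `E ⊆ ℝⁿ`,
every non-constant rectifiable path `γ` (parametrized by arclength) and every `N ≥ 1`,
the outer measure of the set of `x` such that `E ∩ |γ + x|` contains at least `N` points
is at most `C · ℓ(γ) · N⁻¹ · H^{n-1}(E)`. -/
theorem stmt_8 (n : ℕ) :
    ∃ C : ℝ≥0∞, 0 < C ∧ C ≠ ⊤ ∧
      ∀ (E : Set (EuclideanSpace ℝ (Fin n))) (γ : RectCurve n), 0 < γ.len →
        ∀ N : ℕ, 0 < N →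
          volume {x : EuclideanSpace ℝ (Fin n) |
              (N : ℕ∞) ≤ (E ∩ (fun t => γ.toFun t + x) '' Set.Icc 0 γ.len).encard} ≤
            C * ENNReal.ofReal γ.len * (N : ℝ≥0∞)⁻¹ * μH[(n : ℝ) - 1] E := by
  refine ⟨RectCurve.tubeConstant n, RectCurve.tubeConstant_pos, RectCurve.tubeConstant_ne_top,
    fun E γ hL N hN => ?_⟩
  set F : ℕ → Set (EuclideanSpace ℝ (Fin n)) := fun m =>
    {x | ∃ S ⊆ E ∩ (fun τ => γ.toFun τ + x) '' Icc 0 γ.len,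
      (N : ℕ∞) ≤ S.encard ∧ IsSeparated (m : ℝ≥0∞)⁻¹ S}
  have hF_mono : Monotone F := fun m m' hm x ⟨S, hS, hNS, hsep⟩ =>
    ⟨S, hS, hNS, hsep.anti (ENNReal.inv_le_inv.2 (by exact_mod_cast hm))⟩
  have hF_cover : {x | (N : ℕ∞) ≤ (E ∩ (fun t => γ.toFun t + x) '' Icc 0 γ.len).encard} ⊆
      ⋃ m, F m := by
    intro x hx
    obtain ⟨S, hS, hSN⟩ := exists_subset_encard_eq hx
    obtain ⟨m, hm⟩ := ENNReal.exists_inv_nat_lt (finite_of_encard_eq_coe hSN).einfsep_pos.ne'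
    exact mem_iUnion.2 ⟨m, S, hS, hSN.ge, fun a ha b hb hab =>
      hm.trans_le (einfsep_le_edist_of_mem ha hb hab)⟩
  have hN₀ : (N : ℝ≥0∞) ≠ 0 := by exact_mod_cast hN.ne'
  calc _ ≤ volume (⋃ m, F m) := measure_mono hF_cover
    _ = ⨆ m, volume (F m) := hF_mono.measure_iUnion
    _ ≤ _ := iSup_le fun m => by
        rw [mul_right_comm, ← div_eq_mul_inv, ENNReal.le_div_iff_mul_le (.inl hN₀)
          (.inl (ENNReal.natCast_ne_top N)), mul_comm]
        exact γ.natCast_mul_volume_le_of_isSeparated hL E N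
          (ENNReal.inv_pos.2 (ENNReal.natCast_ne_top m))
end

section
/- Let E ⊆ ℝⁿ and let γ be a non-constant rectifiable path. Let F₁ be the set of x ∈ ℝⁿ such that E ∩ |γ + x| ≠ ∅. Then the outer Lebesgue n-measure of F₁ is at most c(n) · max{ℓ(γ), diam(E)} · diam(E)^{n-1} for a constant c(n) depending only on n. -/
open MeasureTheory Set
open scoped ENNReal

/-!
Write `F₁ = E - |γ|`. Cutting `γ` into arcs of length `h`, `|γ|` lies in `⌊ℓ/h⌋ + 1` balls of
radius `h`, so `F₁` lies in as many balls of radius `diam E + h` centred in `e₀ - |γ|` for a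
fixed `e₀ ∈ E`. For `h ≥ diam E` this gives `|F₁| ≤ 2ⁿ (ℓ + h) hⁿ⁻¹ |B(0,1)|`, and letting
`h ↓ diam E` yields the bound, also when `diam E = 0`. In dimension `0` every path is constant.
-/

open Metric
open scoped Pointwise

theorem setOf_inter_image_add_nonempty_eq_sub {α G : Type*} [AddCommGroup G] (E : Set G)
    (f : α → G) (s : Set α) : {x | (E ∩ (fun t => f t + x) '' s).Nonempty} = E - f '' s := by
  ext x
  simp only [mem_ofPred_eq, Set.Nonempty, mem_inter_iff, mem_image, mem_sub]
  constructor
  · rintro ⟨_, he, t, ht, rfl⟩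
    exact ⟨_, he, f t, ⟨t, ht, rfl⟩, add_sub_cancel_left _ _⟩
  · rintro ⟨e, he, _, ⟨t, ht, rfl⟩, rfl⟩
    exact ⟨e, he, t, ht, add_sub_cancel _ _⟩

theorem sub_subset_iUnion_closedBall {V ι : Type*} [SeminormedAddCommGroup V] {E S : Set V}
    (hE : Bornology.IsBounded E) {e₀ : V} (he₀ : e₀ ∈ E) {s : Finset ι} {p : ι → V} {r : ℝ}
    (hS : S ⊆ ⋃ i ∈ s, closedBall (p i) r) :
    E - S ⊆ ⋃ i ∈ s, closedBall (e₀ - p i) (diam E + r) := by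
  rintro _ ⟨e, he, y, hy, rfl⟩
  obtain ⟨i, hi, hyi⟩ := mem_iUnion₂.1 (hS hy)
  refine mem_iUnion₂.2 ⟨i, hi, ?_⟩
  calc dist (e - y) (e₀ - p i) ≤ dist e e₀ + dist y (p i) := dist_sub_sub_le _ _ _ _
    _ ≤ diam E + r := add_le_add (dist_le_diam_of_mem hE he he₀) hyi

theorem addHaar_sub_le_of_subset_iUnion_closedBall {V ι : Type*} [NormedAddCommGroup V]
    [NormedSpace ℝ V] [FiniteDimensional ℝ V] [MeasurableSpace V] [BorelSpace V]
    (μ : Measure V) [μ.IsAddHaarMeasure] {E S : Set V} (hE : Bornology.IsBounded E)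
    {s : Finset ι} {p : ι → V} {r : ℝ} (hr : 0 ≤ r) (hS : S ⊆ ⋃ i ∈ s, closedBall (p i) r) :
    μ (E - S) ≤ s.card * ENNReal.ofReal ((diam E + r) ^ Module.finrank ℝ V) * μ (ball 0 1) := by
  obtain rfl | ⟨e₀, he₀⟩ := E.eq_empty_or_nonempty
  · simp
  calc μ (E - S) ≤ μ (⋃ i ∈ s, closedBall (e₀ - p i) (diam E + r)) :=
        measure_mono (sub_subset_iUnion_closedBall hE he₀ hS)
    _ ≤ ∑ i ∈ s, μ (closedBall (e₀ - p i) (diam E + r)) := measure_biUnion_finset_le _ _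
    _ = s.card * ENNReal.ofReal ((diam E + r) ^ Module.finrank ℝ V) * μ (ball 0 1) := by
        simp_rw [Measure.addHaar_closedBall μ _ (add_nonneg diam_nonneg hr), Finset.sum_const,
          nsmul_eq_mul, mul_assoc]

theorem Nat.floor_div_add_one_mul_le {a h : ℝ} (ha : 0 ≤ a) (hh : 0 < h) :
    ((⌊a / h⌋₊ + 1 : ℕ) : ℝ) * h ≤ a + h := by
  have := (le_div_iff₀ hh).1 (Nat.floor_le (div_nonneg ha hh.le))
  push_cast
  linarith

namespace RectCurve

variable {n : ℕ} (γ : RectCurve n)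

theorem dist_le_sub_s9 {s t : ℝ} (hs : 0 ≤ s) (hst : s ≤ t) (ht : t ≤ γ.len) :
    dist (γ.toFun s) (γ.toFun t) ≤ t - s := by
  have hvar : eVariationOn γ.toFun (Icc s t) = ENNReal.ofReal (t - s) := by
    have hadd := eVariationOn.Icc_add_Icc γ.toFun (s := univ) hs hst (mem_univ s)
    simp only [univ_inter] at hadd
    rw [γ.arclength s ⟨hs, hst.trans ht⟩, γ.arclength t ⟨hs.trans hst, ht⟩, add_comm] at hadd
    rw [ENNReal.ofReal_sub _ hs]
    exact ENNReal.eq_sub_of_add_eq ENNReal.ofReal_ne_top hadd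
  have hedist := eVariationOn.edist_le γ.toFun (left_mem_Icc.2 hst) (right_mem_Icc.2 hst)
  rw [hvar, edist_dist] at hedist
  exact (ENNReal.ofReal_le_ofReal_iff (sub_nonneg.2 hst)).1 hedist

theorem image_subset_iUnion_closedBall {h : ℝ} (hh : 0 < h) :
    γ.toFun '' Icc 0 γ.len ⊆
      ⋃ k ∈ Finset.range (⌊γ.len / h⌋₊ + 1), closedBall (γ.toFun (k * h)) h := by
  rintro _ ⟨t, ht, rfl⟩
  set k := ⌊t / h⌋₊
  have hkt : k * h ≤ t := (le_div_iff₀ hh).1 (Nat.floor_le (div_nonneg ht.1 hh.le))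
  have htk : t < (k + 1) * h := (div_lt_iff₀ hh).1 (Nat.lt_floor_add_one _)
  refine mem_iUnion₂.2 ⟨k, Finset.mem_range.2 (Nat.lt_succ_of_le ?_), ?_⟩
  · exact Nat.floor_le_floor (div_le_div_of_nonneg_right ht.2 hh.le)
  · rw [mem_closedBall, dist_comm]
    have := γ.dist_le_sub_s9 (by positivity) hkt ht.2
    linarith

theorem volume_sub_image_le {E : Set (EuclideanSpace ℝ (Fin n))} (hE : Bornology.IsBounded E)
    (hn : n ≠ 0) {h : ℝ} (hh : 0 < h) (hEh : diam E ≤ h) :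
    volume (E - γ.toFun '' Icc 0 γ.len) ≤
      ENNReal.ofReal (2 ^ n * (γ.len + h) * h ^ (n - 1)) *
        volume (ball (0 : EuclideanSpace ℝ (Fin n)) 1) := by
  have hcover := addHaar_sub_le_of_subset_iUnion_closedBall volume hE hh.le
    (γ.image_subset_iUnion_closedBall hh)
  rw [Finset.card_range, finrank_euclideanSpace_fin, ← ENNReal.ofReal_natCast,
    ← ENNReal.ofReal_mul (Nat.cast_nonneg _)] at hcover
  refine hcover.trans (mul_le_mul_left (ENNReal.ofReal_le_ofReal ?_) _)
  obtain ⟨m, rfl⟩ := Nat.exists_eq_succ_of_ne_zero hn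
  have hdiam : (diam E + h) ^ (m + 1) ≤ 2 ^ (m + 1) * h ^ (m + 1) := by
    rw [← mul_pow]
    exact pow_le_pow_left₀ (add_nonneg diam_nonneg hh.le) (by linarith) _
  calc ((⌊γ.len / h⌋₊ + 1 : ℕ) : ℝ) * (diam E + h) ^ (m + 1)
      ≤ ((⌊γ.len / h⌋₊ + 1 : ℕ) : ℝ) * (2 ^ (m + 1) * h ^ (m + 1)) := by gcongr
    _ = 2 ^ (m + 1) * (((⌊γ.len / h⌋₊ + 1 : ℕ) : ℝ) * h) * h ^ m := by ring
    _ ≤ 2 ^ (m + 1) * (γ.len + h) * h ^ m := by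
        gcongr
        exact Nat.floor_div_add_one_mul_le γ.len_nonneg hh
    _ = 2 ^ (m + 1) * (γ.len + h) * h ^ (m + 1 - 1) := rfl

theorem volume_sub_image_le_diam {E : Set (EuclideanSpace ℝ (Fin n))}
    (hE : Bornology.IsBounded E) (hn : n ≠ 0) :
    volume (E - γ.toFun '' Icc 0 γ.len) ≤
      ENNReal.ofReal (2 ^ n * (γ.len + diam E) * diam E ^ (n - 1)) *
        volume (ball (0 : EuclideanSpace ℝ (Fin n)) 1) := by
  refine ge_of_tendsto (x := nhdsWithin (diam E) (Ioi (diam E))) ?_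
    (eventually_nhdsWithin_of_forall fun h (hh : diam E < h) =>
      γ.volume_sub_image_le hE hn (diam_nonneg.trans_lt hh) hh.le)
  refine ENNReal.Tendsto.mul_const (ENNReal.tendsto_ofReal ?_) (Or.inr measure_ball_lt_top.ne)
  exact (Continuous.tendsto (by fun_prop) _).mono_left nhdsWithin_le_nhds

end RectCurve

/-- There is a constant `C = C(n)` such that for every set `E ⊆ ℝⁿ` and
every non-constant rectifiable path `γ`, the outer measure of the set of `x` with
`E ∩ |γ + x| ≠ ∅` is at most `C · max{ℓ(γ), diam E} · (diam E)^{n-1}`. -/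
theorem stmt_9 (n : ℕ) :
    ∃ C : ℝ≥0∞, 0 < C ∧ C ≠ ⊤ ∧
      ∀ (E : Set (EuclideanSpace ℝ (Fin n))) (γ : RectCurve n), 0 < γ.len →
        volume {x : EuclideanSpace ℝ (Fin n) |
            (E ∩ (fun t => γ.toFun t + x) '' Set.Icc 0 γ.len).Nonempty} ≤
          C * max (ENNReal.ofReal γ.len) (EMetric.diam E) * EMetric.diam E ^ (n - 1) := by
  set B := volume (ball (0 : EuclideanSpace ℝ (Fin n)) 1)
  have hB0 : B ≠ 0 := (measure_ball_pos volume _ one_pos).ne'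
  refine ⟨2 ^ (n + 1) * B, by positivity,
    ENNReal.mul_ne_top (ENNReal.pow_ne_top ENNReal.ofNat_ne_top) measure_ball_lt_top.ne,
    fun E γ hγ => ?_⟩
  change _ ≤ _ * max _ (ediam E) * ediam E ^ (n - 1)
  obtain rfl | hn := eq_or_ne n 0
  · exact absurd γ.len_eq_zero hγ.ne'
  by_cases hE : Bornology.IsBounded E
  swap
  · rw [ediam_of_unbounded hE, max_eq_right le_top, ENNReal.mul_top (by positivity),
      ENNReal.top_mul (pow_ne_zero _ ENNReal.top_ne_zero)]
    exact le_top
  rw [setOf_inter_image_add_nonempty_eq_sub, ← ENNReal.ofReal_toReal hE.ediam_ne_top]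
  refine (γ.volume_sub_image_le_diam hE hn).trans ?_
  have hmax : γ.len + diam E ≤ 2 * max γ.len (diam E) := by
    linarith [le_max_left γ.len (diam E), le_max_right γ.len (diam E)]
  calc ENNReal.ofReal (2 ^ n * (γ.len + diam E) * diam E ^ (n - 1)) * B
      ≤ ENNReal.ofReal (2 ^ (n + 1) * max γ.len (diam E) * diam E ^ (n - 1)) * B := by
        gcongr ENNReal.ofReal ?_ * B
        rw [pow_succ, mul_assoc (2 ^ n : ℝ) 2]
        gcongr
    _ = 2 ^ (n + 1) * B * max (ENNReal.ofReal γ.len) (ENNReal.ofReal (diam E)) *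
        ENNReal.ofReal (diam E) ^ (n - 1) := by
        rw [ENNReal.ofReal_mul (by positivity), ENNReal.ofReal_mul (by positivity),
          ENNReal.ofReal_pow (by norm_num), ENNReal.ofReal_pow diam_nonneg, ENNReal.ofReal_max,
          ENNReal.ofReal_ofNat]
        ring
end

section
/- Let E ⊆ ℝⁿ, x ∈ ℝⁿ, r > 0, and for each unit vector w ∈ S^{n-1} define γ_w(t) = x + tw for t ∈ [r/2, r]. Let F₁ be the set of w ∈ S^{n-1} such that E ∩ |γ_w| ≠ ∅. Then H^{n-1}(F₁) ≤ c(n) · r^{-(n-1)} · min{r, diam(E)}^{n-1} for a dimensional constant c(n). -/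
/-!
If the segments in directions `w₀` and `w` meet `E` at `y₀ = x + t₀ w₀` and `y = x + t w`, then
`t ‖w - w₀‖ ≤ 2 ‖y - y₀‖` with `t ≥ r / 2`, so `F₁` lies in the spherical cap of radius
`4 min(r, diam E) / r` around `w₀`. A cap of radius `ρ ≤ 1` is the image of a ball of radius `2ρ`
in the tangent hyperplane at `w₀` under the radial projection `z ↦ (w₀ + z) / ‖w₀ + z‖`, which is
2-Lipschitz outside the unit ball; hence its `H^{n-1}`-measure is `O(ρ^{n-1})`. Larger caps are
controlled by `H^{n-1}` of the whole sphere, finite since the sphere is covered by finitely many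
small caps.
-/

open MeasureTheory Set Metric Module
open scoped ENNReal NNReal RealInnerProductSpace

section Normalize

variable {V : Type*} [NormedAddCommGroup V] [NormedSpace ℝ V]

theorem lipschitzOnWith_normalize_one_le_norm :
    LipschitzOnWith 2 (NormedSpace.normalize : V → V) {x | 1 ≤ ‖x‖} := by
  refine LipschitzOnWith.of_dist_le_mul fun x (hx : 1 ≤ ‖x‖) y (hy : 1 ≤ ‖y‖) => ?_
  have hx0 : 0 < ‖x‖ := one_pos.trans_le hx
  have hy0 : 0 < ‖y‖ := one_pos.trans_le hy
  have hsplit : NormedSpace.normalize x - NormedSpace.normalize y =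
      ‖x‖⁻¹ • (x - y) + (‖x‖⁻¹ - ‖y‖⁻¹) • y := by
    simp only [NormedSpace.normalize, smul_sub, sub_smul]; abel
  have hcoef : |‖x‖⁻¹ - ‖y‖⁻¹| * ‖y‖ ≤ ‖x‖⁻¹ * ‖x - y‖ := by
    rw [inv_sub_inv hx0.ne' hy0.ne', abs_div, abs_mul, abs_of_pos hx0, abs_of_pos hy0,
      div_mul_eq_mul_div, mul_div_mul_right _ _ hy0.ne', abs_sub_comm, ← div_eq_inv_mul]
    exact div_le_div_of_nonneg_right (abs_norm_sub_norm_le x y) hx0.le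
  rw [dist_eq_norm, dist_eq_norm, hsplit, NNReal.coe_ofNat]
  calc ‖‖x‖⁻¹ • (x - y) + (‖x‖⁻¹ - ‖y‖⁻¹) • y‖
      ≤ ‖x‖⁻¹ * ‖x - y‖ + |‖x‖⁻¹ - ‖y‖⁻¹| * ‖y‖ := by
        refine (norm_add_le _ _).trans_eq ?_
        rw [norm_smul, norm_smul, Real.norm_eq_abs, Real.norm_eq_abs, abs_of_pos (inv_pos.2 hx0)]
    _ ≤ 2 * ‖x‖⁻¹ * ‖x - y‖ := by linarith
    _ ≤ 2 * ‖x - y‖ := by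
        have : ‖x‖⁻¹ ≤ 1 := inv_le_one_of_one_le₀ hx
        nlinarith [norm_nonneg (x - y)]

end Normalize

section Sphere

variable {V : Type*} [NormedAddCommGroup V] [InnerProductSpace ℝ V]

theorem sphere_inter_closedBall_subset_image_normalize {w₀ : V} (hw₀ : ‖w₀‖ = 1) {ρ : ℝ}
    (hρ : ρ ≤ 1) :
    sphere (0 : V) 1 ∩ closedBall w₀ ρ ⊆
      (fun z => NormedSpace.normalize (z + w₀)) '' ((ℝ ∙ w₀)ᗮ ∩ closedBall 0 (2 * ρ)) := by
  rintro w ⟨hw, hwρ⟩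
  rw [mem_sphere_zero_iff_norm] at hw
  rw [mem_closedBall, dist_eq_norm] at hwρ
  set c := ⟪w, w₀⟫
  have hdist : ‖w - w₀‖ ^ 2 = 2 - 2 * c := by
    rw [norm_sub_sq_real, hw, hw₀]; ring
  have hc : 1 / 2 ≤ c := by nlinarith [norm_nonneg (w - w₀)]
  have hc0 : 0 < c := by linarith
  have hc1 : c ≤ 1 := by nlinarith [sq_nonneg ‖w - w₀‖]
  -- `c⁻¹ • w` is where the ray through `w` meets the tangent hyperplane `w₀ + (ℝ ∙ w₀)ᗮ`.
  refine ⟨c⁻¹ • w - w₀, ⟨?_, ?_⟩, ?_⟩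
  · rw [SetLike.mem_coe, Submodule.mem_orthogonal_singleton_iff_inner_left, inner_sub_left,
      real_inner_smul_left, real_inner_self_eq_norm_sq, hw₀, inv_mul_cancel₀ hc0.ne']
    norm_num
  · have hsq : ‖c⁻¹ • w - w₀‖ ^ 2 = c⁻¹ ^ 2 - 1 := by
      rw [norm_sub_sq_real, norm_smul, real_inner_smul_left, hw, hw₀, Real.norm_eq_abs,
        abs_of_pos (inv_pos.2 hc0), inv_mul_cancel₀ hc0.ne']
      ring
    have hle : ‖c⁻¹ • w - w₀‖ ^ 2 ≤ (2 * ‖w - w₀‖) ^ 2 := by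
      rw [hsq, mul_pow, hdist, inv_pow, ← one_div, div_sub_one (by positivity)]
      rw [div_le_iff₀ (by positivity)]
      nlinarith [mul_nonneg (sub_nonneg.2 hc1) (show 0 ≤ 8 * c ^ 2 - 1 - c by nlinarith)]
    rw [pow_le_pow_iff_left₀ (norm_nonneg _) (by positivity) two_ne_zero] at hle
    rw [mem_closedBall, dist_zero_right]
    linarith
  · simp only [sub_add_cancel]
    rw [NormedSpace.normalize_smul_of_pos (inv_pos.2 hc0),
      NormedSpace.normalize_eq_self_of_norm_eq_one hw]

variable [MeasurableSpace V] [BorelSpace V]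

theorem hausdorffMeasure_sphere_inter_closedBall_le {m : ℕ} (hm : finrank ℝ V = m + 1)
    {w₀ : V} (hw₀ : ‖w₀‖ = 1) {ρ : ℝ} (hρ₀ : 0 ≤ ρ) (hρ₁ : ρ ≤ 1) :
    μH[m] (sphere (0 : V) 1 ∩ closedBall w₀ ρ) ≤
      4 ^ m * μH[m] (closedBall (0 : EuclideanSpace ℝ (Fin m)) 1) * ENNReal.ofReal ρ ^ m := by
  have : Fact (finrank ℝ V = m + 1) := ⟨hm⟩
  have hw₀0 : w₀ ≠ 0 := by rintro rfl; simp at hw₀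
  let b := OrthonormalBasis.fromOrthogonalSpanSingleton (𝕜 := ℝ) m hw₀0
  let L : EuclideanSpace ℝ (Fin m) → V := fun u => (b.repr.symm u : V)
  have hL_norm (u) : ‖L u‖ = ‖u‖ := b.repr.symm.norm_map u
  have hL_isometry : Isometry L :=
    (Submodule.subtypeₗᵢ _).isometry.comp b.repr.symm.isometry
  have hL_image : ((ℝ ∙ w₀)ᗮ : Set V) ∩ closedBall 0 (2 * ρ) ⊆ L '' closedBall 0 (2 * ρ) := by
    rintro z ⟨hz, hzρ⟩
    refine ⟨b.repr ⟨z, hz⟩, ?_, by simp [L]⟩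
    simpa using hzρ
  have hL_norm_add (u) : 1 ≤ ‖L u + w₀‖ := by
    have hperp : ⟪L u, w₀⟫ = 0 :=
      Submodule.mem_orthogonal_singleton_iff_inner_left.1 (b.repr.symm u).2
    have : ‖L u + w₀‖ ^ 2 = ‖u‖ ^ 2 + 1 := by
      rw [norm_add_sq_real, hperp, hw₀, hL_norm]; ring
    nlinarith [norm_nonneg (L u + w₀), sq_nonneg ‖u‖]
  have hg : LipschitzWith 2 (fun u => NormedSpace.normalize (L u + w₀)) := by
    have h := lipschitzOnWith_normalize_one_le_norm.comp
      (((IsometryEquiv.addRight w₀).isometry.comp hL_isometry).lipschitz.lipschitzOnWith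
        (s := univ))
      (fun u _ => hL_norm_add u)
    rwa [lipschitzOnWith_univ, mul_one] at h
  calc μH[m] (sphere (0 : V) 1 ∩ closedBall w₀ ρ)
      ≤ μH[m] ((fun u => NormedSpace.normalize (L u + w₀)) '' closedBall 0 (2 * ρ)) := by
        refine measure_mono ((sphere_inter_closedBall_subset_image_normalize hw₀ hρ₁).trans ?_)
        rw [← image_image (fun z => NormedSpace.normalize (z + w₀)) L]
        exact image_mono hL_image
    _ ≤ 2 ^ m * μH[m] (closedBall (0 : EuclideanSpace ℝ (Fin m)) (2 * ρ)) := by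
        simpa using hg.hausdorffMeasure_image_le (Nat.cast_nonneg m) (closedBall 0 (2 * ρ))
    _ = 4 ^ m * μH[m] (closedBall (0 : EuclideanSpace ℝ (Fin m)) 1) * ENNReal.ofReal ρ ^ m := by
        rw [Measure.addHaar_closedBall' _ _ (by positivity), finrank_euclideanSpace_fin,
          ENNReal.ofReal_pow (by positivity), ENNReal.ofReal_mul zero_le_two, ENNReal.ofReal_ofNat]
        ring_nf
        rw [pow_mul', show (2 : ℝ≥0∞) ^ 2 = 4 by norm_num]

theorem hausdorffMeasure_sphere_ne_top {m : ℕ} (hm : finrank ℝ V = m + 1) :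
    μH[m] (sphere (0 : V) 1) ≠ ⊤ := by
  have : FiniteDimensional ℝ V := Module.finite_of_finrank_eq_succ hm
  have hball : μH[m] (closedBall (0 : EuclideanSpace ℝ (Fin m)) 1) < ⊤ :=
    measure_closedBall_lt_top
  obtain ⟨t, hts, htf, hcover⟩ := (isCompact_sphere (0 : V) 1).finite_cover_balls one_pos
  have hcap : ∀ w ∈ t, μH[m] (sphere (0 : V) 1 ∩ closedBall w 1) < ⊤ := fun w hw =>
    lt_of_le_of_lt
      (hausdorffMeasure_sphere_inter_closedBall_le hm (mem_sphere_zero_iff_norm.1 (hts hw))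
        zero_le_one le_rfl)
      (by finiteness)
  refine ne_top_of_le_ne_top (measure_biUnion_lt_top htf hcap).ne (measure_mono fun z hz => ?_)
  obtain ⟨w, hw, hzw⟩ := mem_iUnion₂.1 (hcover hz)
  exact mem_iUnion₂.2 ⟨w, hw, hz, ball_subset_closedBall hzw⟩

theorem exists_hausdorffMeasure_sphere_inter_closedBall_le {m : ℕ} (hm : finrank ℝ V = m + 1) :
    ∃ C : ℝ≥0∞, C ≠ ⊤ ∧ ∀ w₀ : V, ‖w₀‖ = 1 → ∀ ρ : ℝ, 0 ≤ ρ →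
      μH[m] (sphere (0 : V) 1 ∩ closedBall w₀ ρ) ≤ C * ENNReal.ofReal ρ ^ m := by
  refine ⟨max (4 ^ m * μH[m] (closedBall (0 : EuclideanSpace ℝ (Fin m)) 1))
    (μH[m] (sphere (0 : V) 1)), ?_, fun w₀ hw₀ ρ hρ₀ => ?_⟩
  · have hball : μH[m] (closedBall (0 : EuclideanSpace ℝ (Fin m)) 1) < ⊤ :=
      measure_closedBall_lt_top
    exact max_ne_top (by finiteness) (hausdorffMeasure_sphere_ne_top hm)
  rcases le_or_gt ρ 1 with hρ₁ | hρ₁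
  · exact (hausdorffMeasure_sphere_inter_closedBall_le hm hw₀ hρ₀ hρ₁).trans
      (mul_le_mul_left (le_max_left _ _) _)
  · calc μH[m] (sphere (0 : V) 1 ∩ closedBall w₀ ρ)
        ≤ μH[m] (sphere (0 : V) 1) := measure_mono inter_subset_left
      _ ≤ max (4 ^ m * μH[m] (closedBall (0 : EuclideanSpace ℝ (Fin m)) 1))
            (μH[m] (sphere (0 : V) 1)) := le_max_right _ _
      _ ≤ _ := le_mul_of_one_le_right' (one_le_pow₀ (by simpa using hρ₁.le))

end Sphere

section HitDirections

variable {V : Type*} [NormedAddCommGroup V] [NormedSpace ℝ V]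

theorem mul_norm_sub_le_two_mul_norm_smul_sub_smul {w w₀ : V} (hw : ‖w‖ = 1) (hw₀ : ‖w₀‖ = 1)
    {t t₀ : ℝ} (ht : 0 ≤ t) (ht₀ : 0 ≤ t₀) :
    t * ‖w - w₀‖ ≤ 2 * ‖t • w - t₀ • w₀‖ := by
  have hdiff : |t₀ - t| ≤ ‖t • w - t₀ • w₀‖ := by
    simpa [norm_smul_of_nonneg, ht, ht₀, hw, hw₀, abs_sub_comm] using
      abs_norm_sub_norm_le (t • w) (t₀ • w₀)
  calc t * ‖w - w₀‖ = ‖(t • w - t₀ • w₀) + (t₀ - t) • w₀‖ := by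
        rw [← norm_smul_of_nonneg ht]; congr 1; module
    _ ≤ ‖t • w - t₀ • w₀‖ + |t₀ - t| := by
        refine (norm_add_le _ _).trans_eq ?_
        rw [norm_smul, hw₀, mul_one, Real.norm_eq_abs]
    _ ≤ 2 * ‖t • w - t₀ • w₀‖ := by linarith

def hitDirections (E : Set V) (x : V) (r : ℝ) : Set V :=
  {w | w ∈ sphere (0 : V) 1 ∧ (E ∩ (fun t : ℝ => x + t • w) '' Icc (r / 2) r).Nonempty}

theorem dist_le_of_mem_hitDirections {E : Set V} {x : V} {r : ℝ} (hr : 0 < r) {w w₀ : V}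
    (hw : w ∈ hitDirections E x r) (hw₀ : w₀ ∈ hitDirections E x r) :
    dist w w₀ ≤ 4 * (min (ENNReal.ofReal r) (ediam E)).toReal / r := by
  obtain ⟨hw_unit, -, hyE, t, ⟨ht, -⟩, rfl⟩ := hw
  obtain ⟨hw₀_unit, -, hy₀E, t₀, ⟨ht₀, -⟩, rfl⟩ := hw₀
  rw [mem_sphere_zero_iff_norm] at hw_unit hw₀_unit
  have hδ : min (ENNReal.ofReal r) (ediam E) ≠ ⊤ :=
    ((min_le_left _ _).trans_lt ENNReal.ofReal_lt_top).ne
  have hmin : min r (dist (x + t • w) (x + t₀ • w₀)) ≤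
      (min (ENNReal.ofReal r) (ediam E)).toReal := by
    rw [← ENNReal.ofReal_le_iff_le_toReal hδ, ENNReal.ofReal_min, ← edist_dist]
    exact min_le_min le_rfl (edist_le_ediam_of_mem hyE hy₀E)
  rw [dist_add_left, dist_eq_norm] at hmin
  have hclose : r * dist w w₀ ≤ 4 * min r ‖t • w - t₀ • w₀‖ := by
    have hdist : dist w w₀ ≤ 2 := by
      simpa [hw_unit, hw₀_unit, one_add_one_eq_two] using dist_le_norm_add_norm w w₀
    have := mul_norm_sub_le_two_mul_norm_smul_sub_smul hw_unit hw₀_unit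
      (by linarith : 0 ≤ t) (by linarith : 0 ≤ t₀)
    rw [← dist_eq_norm] at this
    rcases min_cases r ‖t • w - t₀ • w₀‖ with ⟨h, -⟩ | ⟨h, -⟩ <;> rw [h] <;>
      nlinarith [dist_nonneg (x := w) (y := w₀)]
  rw [le_div_iff₀ hr]
  linarith

end HitDirections

/-- There is a dimensional constant `C = C(n)` such that for every set
`E ⊆ ℝⁿ`, every `x ∈ ℝⁿ` and `r > 0`, the set `F₁` of unit vectors `w` for which the radial
segment `t ↦ x + t w`, `t ∈ [r/2, r]`, meets `E` satisfies
`H^{n-1}(F₁) ≤ C · r^{-(n-1)} · min{r, diam E}^{n-1}`. -/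
theorem stmt_12 (n : ℕ) :
    ∃ C : ℝ≥0∞, 0 < C ∧ C ≠ ⊤ ∧
      ∀ (E : Set (EuclideanSpace ℝ (Fin n))) (x : EuclideanSpace ℝ (Fin n)) (r : ℝ),
        0 < r →
        μH[(n : ℝ) - 1] {w : EuclideanSpace ℝ (Fin n) |
            w ∈ Metric.sphere (0 : EuclideanSpace ℝ (Fin n)) 1 ∧
            (E ∩ (fun t : ℝ => x + t • w) '' Set.Icc (r / 2) r).Nonempty} ≤
          C * (ENNReal.ofReal r)⁻¹ ^ (n - 1) *
            min (ENNReal.ofReal r) (EMetric.diam E) ^ (n - 1) := by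
  cases n with
  | zero =>
    refine ⟨1, one_pos, ENNReal.one_ne_top, fun E x r _ => ?_⟩
    simp [sphere_eq_empty_of_subsingleton one_ne_zero]
  | succ m =>
    obtain ⟨C, hC, hcap⟩ := exists_hausdorffMeasure_sphere_inter_closedBall_le
      (V := EuclideanSpace ℝ (Fin (m + 1))) finrank_euclideanSpace_fin
    refine ⟨4 ^ m * C + 1, by positivity, by finiteness, fun E x r hr => ?_⟩
    change μH[_] (hitDirections E x r) ≤ _
    simp only [Nat.cast_add, Nat.cast_one, add_sub_cancel_right, Nat.add_sub_cancel]
    obtain hF | ⟨w₀, hw₀⟩ := (hitDirections E x r).eq_empty_or_nonempty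
    · simp [hF]
    set δ := min (ENNReal.ofReal r) (ediam E)
    have hδ : δ ≠ ⊤ := ((min_le_left _ _).trans_lt ENNReal.ofReal_lt_top).ne
    calc μH[m] (hitDirections E x r)
        ≤ μH[m] (sphere 0 1 ∩ closedBall w₀ (4 * δ.toReal / r)) :=
          measure_mono fun w hw => ⟨hw.1, dist_le_of_mem_hitDirections hr hw hw₀⟩
      _ ≤ C * ENNReal.ofReal (4 * δ.toReal / r) ^ m :=
          hcap w₀ (mem_sphere_zero_iff_norm.1 hw₀.1) _ (by positivity)
      _ = 4 ^ m * C * (ENNReal.ofReal r)⁻¹ ^ m * δ ^ m := by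
          rw [ENNReal.ofReal_div_of_pos hr, ENNReal.ofReal_mul zero_le_four,
            ENNReal.ofReal_toReal hδ, ENNReal.ofReal_ofNat, div_eq_mul_inv]
          ring
      _ ≤ (4 ^ m * C + 1) * (ENNReal.ofReal r)⁻¹ ^ m * δ ^ m := by gcongr; exact le_self_add
end

section
/- Let G_i, i ∈ ℕ, be an increasing sequence of continua (compact connected sets) in ℝⁿ with sup_i H¹(G_i) < ∞, where H¹ denotes 1-dimensional Hausdorff measure. Let G = ⋃_{i∈ℕ} G_i. Then H¹(closure(G) ∖ G) = 0. -/
/-!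
Fix `k`. A point `p ∈ closure G \ G` lies at positive distance `d` from the closed set `Gₖ`, so
`closedBall p (d / 2)` misses `Gₖ`; it contains a point `q` of some `Gⱼ ⊇ Gₖ` close to `p`, and
since `Gⱼ` is connected and reaches `Gₖ`, projecting radially from `q` shows that `Gⱼ \ Gₖ` has
length at least `d / 4` inside that ball. The Vitali covering lemma then covers `closure G \ G` by
countably many balls whose diameters sum to at most `16 · H¹(G \ Gₖ)`, and
`H¹(G \ Gₖ) → 0` because `H¹(G) = supₖ H¹(Gₖ) < ∞`.
-/

open MeasureTheory Metric Set Filter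
open scoped ENNReal Topology

theorem Monotone.tendsto_measure_iUnion_diff {α ι : Type*} [MeasurableSpace α] {μ : Measure α}
    [Countable ι] [Preorder ι] [IsCountablyGenerated (atTop : Filter ι)] {s : ι → Set α}
    (hs : Monotone s) (hmeas : ∀ i, NullMeasurableSet (s i) μ) (hfin : μ (⋃ i, s i) ≠ ∞) :
    Tendsto (fun k ↦ μ ((⋃ i, s i) \ s k)) atTop (𝓝 0) := by
  rcases isEmpty_or_nonempty ι with hι | ⟨⟨i₀⟩⟩
  · exact tendsto_of_isEmpty
  have hempty : ⋂ k, (⋃ i, s i) \ s k = ∅ :=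
    eq_empty_of_forall_notMem fun x hx ↦
      have ⟨i, hi⟩ := mem_iUnion.1 (mem_iInter.1 hx i₀).1
      (mem_iInter.1 hx i).2 hi
  have := tendsto_measure_iInter_atTop (μ := μ)
    (fun k ↦ (NullMeasurableSet.iUnion hmeas).diff (hmeas k))
    (fun i j hij ↦ sdiff_subset_sdiff_right (hs hij))
    ⟨i₀, ne_top_of_le_ne_top hfin (measure_mono sdiff_subset)⟩
  rwa [hempty, measure_empty] at this

variable {X : Type*} [MetricSpace X] [MeasurableSpace X] [BorelSpace X]

theorem IsPreconnected.ofReal_le_hausdorffMeasure_inter_closedBall {s : Set X}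
    (hs : IsPreconnected s) {y z : X} (hy : y ∈ s) (hz : z ∈ s) {r : ℝ} (hr : r ≤ dist y z) :
    ENNReal.ofReal r ≤ μH[1] (s ∩ closedBall y r) := by
  have hIcc : Icc 0 r ⊆ dist y '' (s ∩ closedBall y r) := by
    rintro t ⟨ht0, htr⟩
    obtain ⟨p, hp, rfl⟩ : t ∈ dist y '' s :=
      (hs.image _ (continuous_const.dist continuous_id).continuousOn).Icc_subset
        ⟨y, hy, dist_self y⟩ ⟨z, hz, rfl⟩ ⟨ht0, htr.trans hr⟩
    exact ⟨p, ⟨hp, mem_closedBall'.2 htr⟩, rfl⟩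
  calc ENNReal.ofReal r = μH[1] (Icc 0 r) := by
        rw [hausdorffMeasure_real, Real.volume_Icc, sub_zero]
    _ ≤ μH[1] (dist y '' (s ∩ closedBall y r)) := measure_mono hIcc
    _ ≤ μH[1] (s ∩ closedBall y r) := by
        simpa using (LipschitzWith.dist_right y).hausdorffMeasure_image_le zero_le_one _

theorem IsPreconnected.ofReal_le_two_mul_hausdorffMeasure_diff_inter_closedBall {s K : Set X}
    (hs : IsPreconnected s) (hKs : K ⊆ s) (hK : K.Nonempty) {p q : X} (hq : q ∈ s) {ρ : ℝ}
    (hρK : ρ < infDist p K) (hpq : dist p q ≤ ρ / 2) :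
    ENNReal.ofReal ρ ≤ 2 * μH[1] ((s \ K) ∩ closedBall p ρ) := by
  obtain ⟨g, hg⟩ := hK
  have hqg : ρ / 2 ≤ dist q g := by
    linarith [infDist_le_dist_of_mem hg (x := p), dist_triangle p q g]
  have hsub : s ∩ closedBall q (ρ / 2) ⊆ (s \ K) ∩ closedBall p ρ := by
    rintro w ⟨hws, hwq⟩
    have hwp : dist w p ≤ ρ := by
      linarith [mem_closedBall.1 hwq, dist_triangle w q p, dist_comm p q]
    refine ⟨⟨hws, fun hwK ↦ ?_⟩, hwp⟩
    linarith [infDist_le_dist_of_mem hwK (x := p), dist_comm p w]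
  calc ENNReal.ofReal ρ = 2 * ENNReal.ofReal (ρ / 2) := by
        rw [← ENNReal.ofReal_ofNat 2, ← ENNReal.ofReal_mul zero_le_two,
          mul_div_cancel₀ _ two_ne_zero]
    _ ≤ 2 * μH[1] ((s \ K) ∩ closedBall p ρ) := by
        gcongr
        exact (hs.ofReal_le_hausdorffMeasure_inter_closedBall hq (hKs hg) hqg).trans
          (measure_mono hsub)

theorem exists_countable_cover_closedBall_tsum_ediam_le {S T : Set X} (hT : MeasurableSet T)
    (hTfin : μH[1] T ≠ ∞) {C : ℝ≥0∞} (hC : C ≠ ∞) {r : X → ℝ} (hr : ∀ p ∈ S, 0 < r p)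
    (hrT : ∀ p ∈ S, ENNReal.ofReal (r p) ≤ C * μH[1] (T ∩ closedBall p (r p))) :
    ∃ u ⊆ S, u.Countable ∧ S ⊆ ⋃ b ∈ u, closedBall b (4 * r b) ∧
      ∑' b : u, ediam (closedBall (b : X) (4 * r b)) ≤ 8 * C * μH[1] T := by
  have hrle : ∀ p ∈ S, r p ≤ (C * μH[1] T).toReal := fun p hp ↦
    (ENNReal.ofReal_le_iff_le_toReal (ENNReal.mul_ne_top hC hTfin)).1 <|
      (hrT p hp).trans (by gcongr; exact inter_subset_left)
  obtain ⟨u, huS, hdisj, hcov⟩ :=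
    Vitali.exists_disjoint_subfamily_covering_enlargement_closedBall S id r _ hrle 4 (by norm_num)
  set A : X → Set X := fun b ↦ T ∩ closedBall b (r b)
  have hAmeas : ∀ b, MeasurableSet (A b) := fun b ↦ hT.inter measurableSet_closedBall
  have hAdisj : u.PairwiseDisjoint A := hdisj.mono fun b ↦ inter_subset_right
  have hApos : ∀ b ∈ u, 0 < μH[1] (A b) := fun b hb ↦ by
    have := (ENNReal.ofReal_pos.2 (hr b (huS hb))).trans_le (hrT b (huS hb))
    exact pos_of_mul_pos_right this zero_le
  have hu : u.Countable := by
    have := Measure.countable_meas_pos_of_disjoint_of_meas_iUnion_ne_top μH[1]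
      (As := fun b : u ↦ A b) (fun b ↦ hAmeas b)
      (fun b c hbc ↦ hAdisj b.2 c.2 (Subtype.coe_injective.ne hbc))
      (ne_top_of_le_ne_top hTfin (measure_mono (iUnion_subset fun b ↦ inter_subset_left)))
    rw [show {b : u | 0 < μH[1] (A b)} = univ from eq_univ_of_forall fun b ↦ hApos b b.2] at this
    exact countable_coe_iff.1 (countable_univ_iff.1 this)
  refine ⟨u, huS, hu, fun a ha ↦ ?_, ?_⟩
  · obtain ⟨b, hb, hab⟩ := hcov a ha
    exact mem_biUnion hb (hab (mem_closedBall_self (hr a ha).le))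
  calc ∑' b : u, ediam (closedBall (b : X) (4 * r b))
      ≤ ∑' b : u, 8 * C * μH[1] (A b) := ENNReal.tsum_le_tsum fun b ↦ by
        calc ediam (closedBall (b : X) (4 * r b))
            ≤ 2 * ENNReal.ofReal (4 * r b) := by
              rw [← closedEBall_ofReal (by linarith [hr b (huS b.2)])]
              exact ediam_closedEBall_le
          _ = 8 * ENNReal.ofReal (r b) := by
              rw [ENNReal.ofReal_mul zero_le_four, ENNReal.ofReal_ofNat, ← mul_assoc]; norm_num
          _ ≤ 8 * C * μH[1] (A b) := by rw [mul_assoc]; gcongr; exact hrT b (huS b.2)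
    _ = 8 * C * μH[1] (⋃ b ∈ u, A b) := by
        rw [ENNReal.tsum_mul_left, measure_biUnion hu hAdisj fun b _ ↦ hAmeas b]
    _ ≤ 8 * C * μH[1] T := by gcongr; exact iUnion₂_subset fun b _ ↦ inter_subset_left

theorem hausdorffMeasure_one_eq_zero_of_radius_le_mass {S : Set X} {T : ℕ → Set X}
    (hT : ∀ k, MeasurableSet (T k)) (hTfin : ∀ k, μH[1] (T k) ≠ ∞)
    (hT0 : Tendsto (fun k ↦ μH[1] (T k)) atTop (𝓝 0)) {C : ℝ≥0∞} (hC : C ≠ ∞)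
    {r : ℕ → X → ℝ} (hr : ∀ k, ∀ p ∈ S, 0 < r k p)
    (hrT : ∀ k, ∀ p ∈ S, ENNReal.ofReal (r k p) ≤ C * μH[1] (T k ∩ closedBall p (r k p))) :
    μH[1] S = 0 := by
  choose u _ hu hcov hsum using fun k ↦
    exists_countable_cover_closedBall_tsum_ediam_le (hT k) (hTfin k) hC (hr k) (hrT k)
  have : ∀ k, Countable (u k) := fun k ↦ (hu k).to_subtype
  have hlim : Tendsto (fun k ↦ 8 * C * μH[1] (T k)) atTop (𝓝 0) := by
    simpa using ENNReal.Tendsto.const_mul hT0 (Or.inr (ENNReal.mul_ne_top (by simp) hC))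
  refine nonpos_iff_eq_zero.1 <| calc
    μH[1] S ≤ liminf (fun k ↦ ∑' b : u k, ediam (closedBall (b : X) (4 * r k b)) ^ (1 : ℝ)) atTop :=
      Measure.hausdorffMeasure_le_liminf_tsum 1 S _ hlim
        (fun k (b : u k) ↦ closedBall (b : X) (4 * r k b))
        (.of_forall fun k b ↦ (ENNReal.le_tsum b).trans (hsum k))
        (.of_forall fun k ↦ by simpa only [iUnion_coe_set] using hcov k)
    _ ≤ liminf (fun k ↦ 8 * C * μH[1] (T k)) atTop :=
      liminf_le_liminf (.of_forall fun k ↦ by simpa only [ENNReal.rpow_one] using hsum k)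
    _ = 0 := hlim.liminf_eq

/-- If `Gᵢ`, `i ∈ ℕ`, is an increasing sequence of continua in `ℝⁿ` with
`sup_i H¹(Gᵢ) < ∞` and `G = ⋃ᵢ Gᵢ`, then `H¹(closure G ∖ G) = 0`. -/
theorem stmt_13 {n : ℕ} (G : ℕ → Set (EuclideanSpace ℝ (Fin n)))
    (hcompact : ∀ i, IsCompact (G i)) (hconn : ∀ i, IsConnected (G i))
    (hmono : Monotone G) (hsup : (⨆ i, μH[1] (G i)) < ⊤) :
    μH[1] (closure (⋃ i, G i) \ ⋃ i, G i) = 0 := by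
  set U := ⋃ i, G i
  have hGmeas : ∀ k, MeasurableSet (G k) := fun k ↦ (hcompact k).measurableSet
  have hUfin : μH[1] U ≠ ∞ := by rw [hmono.measure_iUnion]; exact hsup.ne
  have hdist : ∀ k, ∀ p ∈ closure U \ U, 0 < infDist p (G k) := fun k p hp ↦
    ((hcompact k).isClosed.notMem_iff_infDist_pos (hconn k).nonempty).1
      fun hpk ↦ hp.2 (mem_iUnion_of_mem k hpk)
  refine hausdorffMeasure_one_eq_zero_of_radius_le_mass (T := fun k ↦ U \ G k)
    (r := fun k p ↦ infDist p (G k) / 2) (C := 2)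
    (fun k ↦ (MeasurableSet.iUnion hGmeas).diff (hGmeas k))
    (fun k ↦ ne_top_of_le_ne_top hUfin (measure_mono sdiff_subset))
    (hmono.tendsto_measure_iUnion_diff (fun k ↦ (hGmeas k).nullMeasurableSet) hUfin)
    ENNReal.ofNat_ne_top (fun k p hp ↦ half_pos (hdist k p hp)) (fun k p hp ↦ ?_)
  obtain ⟨q, hqU, hpq⟩ := Metric.mem_closure_iff.1 hp.1 _ (div_pos (hdist k p hp) four_pos)
  obtain ⟨j, hqj⟩ := mem_iUnion.1 hqU
  calc ENNReal.ofReal (infDist p (G k) / 2)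
      ≤ 2 * μH[1] ((G (max j k) \ G k) ∩ closedBall p (infDist p (G k) / 2)) :=
        (hconn _).isPreconnected.ofReal_le_two_mul_hausdorffMeasure_diff_inter_closedBall
          (hmono (le_max_right j k)) (hconn k).nonempty (hmono (le_max_left j k) hqj)
          (half_lt_self (hdist k p hp)) (by linarith)
    _ ≤ 2 * μH[1] ((U \ G k) ∩ closedBall p (infDist p (G k) / 2)) := by
        gcongr; exact subset_iUnion G _
end

section
/- Let 𝒫 = {D_i}_{i∈ℕ∪{0}} be a packing in ℝⁿ (bounded connected open sets with D_i ⊆ D₀ for i ≥ 1 and D_i ∩ D_j = ∅ for distinct i, j ≥ 1) such that ∂D_i ∩ ∂D_j is countable for all i ≠ j. Let E = closure(D₀) ∖ ⋃_{i≥1} D_i be the residual set. If γ: [0,1] → D₀ is a simple path from a point of D₁ to a point of D₂ that avoids the countable set S = ⋃_{i≠j}(∂D_i ∩ ∂D_j), then γ([0,1]) ∩ E is uncountable. -/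
open MeasureTheory Set

/-- One-sided exit lemma: if `t < s`, `t ∉ U`, `s ∈ U` with `U` open, there is a point of
`closure U \ U` in `[t, s]`. -/
lemma sier_step {U : Set ℝ} {t s : ℝ} (hU : IsOpen U) (hts : t < s) (htU : t ∉ U) (hsU : s ∈ U) :
    ∃ α, α ∈ Set.Icc t s ∧ α ∈ closure U ∧ α ∉ U := by
  set T := {r | r ∈ Set.Icc t s ∧ r ∉ U} with hT
  have hTclosed : IsClosed T := isClosed_Icc.inter hU.isClosed_compl
  have htT : t ∈ T := ⟨⟨le_refl t, hts.le⟩, htU⟩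
  have hbdd : BddAbove T := ⟨s, fun r hr => hr.1.2⟩
  have hmem : sSup T ∈ T := hTclosed.csSup_mem ⟨t, htT⟩ hbdd
  refine ⟨sSup T, hmem.1, ?_, hmem.2⟩
  have hlt : sSup T < s :=
    lt_of_le_of_ne (csSup_le ⟨t, htT⟩ fun r hr => hr.1.2) (fun h => (h ▸ hmem.2) hsU)
  have hsub : Set.Ioc (sSup T) s ⊆ U := by
    intro r hr
    by_contra hrU
    exact absurd (le_csSup hbdd ⟨⟨hmem.1.1.trans hr.1.le, hr.2⟩, hrU⟩) (not_le.mpr hr.1)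
  have hcl : sSup T ∈ closure (Set.Ioc (sSup T) s) := by
    rw [closure_Ioc hlt.ne]; exact ⟨le_refl _, hlt.le⟩
  exact closure_mono hsub hcl

/-- Mirror version of `sier_step`. -/
lemma sier_step' {U : Set ℝ} {t s : ℝ} (hU : IsOpen U) (hst : s < t) (htU : t ∉ U) (hsU : s ∈ U) :
    ∃ α, α ∈ Set.Icc s t ∧ α ∈ closure U ∧ α ∉ U := by
  set T := {r | r ∈ Set.Icc s t ∧ r ∉ U} with hT
  have hTclosed : IsClosed T := isClosed_Icc.inter hU.isClosed_compl
  have htT : t ∈ T := ⟨⟨hst.le, le_refl t⟩, htU⟩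
  have hbdd : BddBelow T := ⟨s, fun r hr => hr.1.1⟩
  have hmem : sInf T ∈ T := hTclosed.csInf_mem ⟨t, htT⟩ hbdd
  refine ⟨sInf T, hmem.1, ?_, hmem.2⟩
  have hlt : s < sInf T :=
    lt_of_le_of_ne (le_csInf ⟨t, htT⟩ fun r hr => hr.1.1) (fun h => hmem.2 (h ▸ hsU))
  have hsub : Set.Ico s (sInf T) ⊆ U := by
    intro r hr
    by_contra hrU
    exact absurd (csInf_le hbdd ⟨⟨hr.1, hr.2.le.trans hmem.1.2⟩, hrU⟩) (not_le.mpr hr.2)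
  have hcl : sInf T ∈ closure (Set.Ico s (sInf T)) := by
    rw [closure_Ico hlt.ne]; exact ⟨hlt.le, le_refl _⟩
  exact closure_mono hsub hcl

/-- Sierpiński-type theorem for `ℝ`: the real line cannot be partitioned into countably many
pairwise disjoint closed sets, at least two of which are nonempty. -/
lemma sierpinski_real {ι : Type*} [Countable ι] (C : ι → Set ℝ) (hcl : ∀ i, IsClosed (C i))
    (hdisj : Pairwise (Function.onFun Disjoint C)) (hcov : (⋃ i, C i) = Set.univ)
    {i₀ i₁ : ι} (hne : i₀ ≠ i₁) (h0 : (C i₀).Nonempty) (h1 : (C i₁).Nonempty) : False := by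
  have hmem_unique : ∀ {x : ℝ} {i j : ι}, x ∈ C i → x ∈ C j → i = j := by
    intro x i j hi hj
    by_contra h
    exact Set.disjoint_left.mp (hdisj h) hi hj
  have hcov' : ∀ x : ℝ, ∃ i, x ∈ C i := fun x => Set.mem_iUnion.mp (hcov ▸ Set.mem_univ x)
  set G : Set ℝ := {x | ∀ i, x ∉ interior (C i)} with hGdef
  have hGclosed : IsClosed G := by
    have h : G = (⋃ i, interior (C i))ᶜ := by
      ext x; simp [hGdef]
    rw [h]
    exact (isOpen_iUnion fun i => isOpen_interior).isClosed_compl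
  by_cases hGne : G.Nonempty
  · haveI := hGclosed.completeSpace_coe
    haveI : Nonempty G := hGne.to_subtype
    obtain ⟨i, x, hx⟩ := nonempty_interior_of_iUnion_of_closed
      (f := fun i => (Subtype.val : G → ℝ) ⁻¹' C i)
      (fun i => (hcl i).preimage continuous_subtype_val)
      (by
        ext u
        simp only [Set.mem_iUnion, Set.mem_preimage, Set.mem_univ, iff_true]
        exact hcov' u)
    obtain ⟨ε, hε, hball⟩ := Metric.mem_nhds_iff.mp (mem_interior_iff_mem_nhds.mp hx)
    have hxC : (x : ℝ) ∈ C i := Set.mem_preimage.mp (interior_subset hx)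
    have hballG : ∀ u : ℝ, u ∈ G → |u - ↑x| < ε → u ∈ C i := by
      intro u hu hlt
      have hmem : (⟨u, hu⟩ : G) ∈ Metric.ball x ε := by
        rw [Metric.mem_ball, Subtype.dist_eq, Real.dist_eq]; exact hlt
      exact hball hmem
    have hxint : (x : ℝ) ∉ interior (C i) := x.2 i
    obtain ⟨s, hsd, hsC⟩ : ∃ s : ℝ, |s - ↑x| < ε ∧ s ∉ C i := by
      by_contra h
      push_neg at h
      apply hxint
      rw [mem_interior_iff_mem_nhds, Metric.mem_nhds_iff]
      exact ⟨ε, hε, fun u hu => h u (by rwa [Metric.mem_ball, Real.dist_eq] at hu)⟩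
    have hsG : s ∉ G := fun hsG' => hsC (hballG s hsG' hsd)
    obtain ⟨m, hsint⟩ : ∃ m, s ∈ interior (C m) := by
      by_contra h; push_neg at h; exact hsG h
    have hmi : m ≠ i := fun h => hsC (h ▸ interior_subset hsint)
    have hxs : (x : ℝ) ≠ s := fun h => hsC (h ▸ hxC)
    have key : ∀ α : ℝ, α ∈ closure (interior (C m)) → α ∉ interior (C m) →
        |α - ↑x| < ε → False := by
      intro α hα1 hα2 hα3
      have hαm : α ∈ C m := by
        have h := closure_mono (interior_subset : interior (C m) ⊆ C m) hα1
        rwa [(hcl m).closure_eq] at h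
      have hαG : α ∈ G := by
        intro k
        by_cases hk : k = m
        · rw [hk]; exact hα2
        · exact fun hint => hk (hmem_unique (interior_subset hint) hαm)
      exact Set.disjoint_left.mp (hdisj hmi) hαm (hballG α hαG hα3)
    rw [abs_sub_lt_iff] at hsd
    rcases lt_or_gt_of_ne hxs with hlt | hgt
    · obtain ⟨α, hαIcc, hαcl, hαnot⟩ := sier_step isOpen_interior hlt (x.2 m) hsint
      apply key α hαcl hαnot
      rw [abs_sub_lt_iff]
      constructor
      · have := hαIcc.2; linarith [hsd.1]
      · have := hαIcc.1; linarith [hε]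
    · obtain ⟨α, hαIcc, hαcl, hαnot⟩ := sier_step' isOpen_interior hgt (x.2 m) hsint
      apply key α hαcl hαnot
      rw [abs_sub_lt_iff]
      constructor
      · have := hαIcc.2; linarith [hε]
      · have := hαIcc.1; linarith [hsd.2]
  · rw [Set.not_nonempty_iff_eq_empty] at hGne
    have hopen : IsOpen (C i₀) := by
      rw [← interior_eq_iff_isOpen]
      apply Set.Subset.antisymm interior_subset
      intro y hy
      have hyG : y ∉ G := by rw [hGne]; exact Set.notMem_empty y
      obtain ⟨j, hj⟩ : ∃ j, y ∈ interior (C j) := by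
        by_contra h; push_neg at h; exact hyG h
      rwa [hmem_unique hy (interior_subset hj)]
    have hclopen : IsClopen (C i₀) := ⟨hcl i₀, hopen⟩
    rcases isClopen_iff.mp hclopen with h | h
    · exact h0.ne_empty h
    · obtain ⟨y, hy⟩ := h1
      exact hne (hmem_unique (h ▸ Set.mem_univ y) hy)

/-- Index renumbering used in the proof of `stmt_19`. -/
def stmt19Idx : ℕ → ℕ
  | 0 => 1
  | 1 => 2
  | n + 2 => n + 3

/-- The rays attached to the first two closed sets in the proof of `stmt_19`. -/
def stmt19Ray : ℕ → Set ℝ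
  | 0 => Set.Iic 0
  | 1 => Set.Ici 1
  | _ + 2 => ∅

lemma stmt19Idx_pos : ∀ n, 1 ≤ stmt19Idx n
  | 0 => le_refl 1
  | 1 => by norm_num [stmt19Idx]
  | n + 2 => by simp [stmt19Idx]

lemma stmt19Idx_inj : ∀ {a b : ℕ}, stmt19Idx a = stmt19Idx b → a = b := by
  intro a b h
  rcases a with _ | _ | a <;> rcases b with _ | _ | b <;>
    simp [stmt19Idx] at h ⊢ <;> omega

lemma stmt19Idx_eq_one {n : ℕ} (h : stmt19Idx n = 1) : n = 0 := by
  rcases n with _ | _ | n <;> simp [stmt19Idx] at h ⊢ <;> omega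

lemma stmt19Idx_eq_two {n : ℕ} (h : stmt19Idx n = 2) : n = 1 := by
  rcases n with _ | _ | n <;> simp [stmt19Idx] at h ⊢ <;> omega

lemma stmt19Idx_surj {i : ℕ} (hi : 1 ≤ i) : ∃ n, stmt19Idx n = i := by
  rcases i with _ | _ | _ | i
  · omega
  · exact ⟨0, rfl⟩
  · exact ⟨1, rfl⟩
  · exact ⟨i + 2, rfl⟩

/-- Let `𝒫 = {Dᵢ}_{i ∈ ℕ∪{0}}` be a packing in `ℝⁿ` (bounded connected open
sets with `Dᵢ ⊆ D₀` for `i ≥ 1`, pairwise disjoint for distinct `i, j ≥ 1`) such that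
`∂Dᵢ ∩ ∂Dⱼ` is countable for all `i ≠ j`, and let `E = closure D₀ ∖ ⋃_{i≥1} Dᵢ` be the
residual set. If `γ : [0,1] → D₀` is a simple path from a point of `D₁` to a point of `D₂`
avoiding `S = ⋃_{i≠j} (∂Dᵢ ∩ ∂Dⱼ)`, then `γ([0,1]) ∩ E` is uncountable. -/
theorem stmt_19 {n : ℕ} (D : ℕ → Set (EuclideanSpace ℝ (Fin n)))
    (hopen : ∀ i, IsOpen (D i)) (hconn : ∀ i, IsConnected (D i))
    (hbdd : ∀ i, Bornology.IsBounded (D i))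
    (hsub : ∀ i, 1 ≤ i → D i ⊆ D 0)
    (hdisj : ∀ i j, 1 ≤ i → 1 ≤ j → i ≠ j → Disjoint (D i) (D j))
    (hctble : ∀ i j, i ≠ j → (frontier (D i) ∩ frontier (D j)).Countable)
    (γ : ℝ → EuclideanSpace ℝ (Fin n))
    (hcont : ContinuousOn γ (Set.Icc 0 1))
    (hinj : Set.InjOn γ (Set.Icc 0 1))
    (hmaps : Set.MapsTo γ (Set.Icc 0 1) (D 0))
    (h0 : γ 0 ∈ D 1) (h1 : γ 1 ∈ D 2)
    (havoid : ∀ s ∈ Set.Icc (0 : ℝ) 1, ∀ i j, i ≠ j →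
      γ s ∉ frontier (D i) ∩ frontier (D j)) :
    ¬ (γ '' Set.Icc 0 1 ∩
        (closure (D 0) \ ⋃ (i : ℕ) (_ : 1 ≤ i), D i)).Countable := by
  intro hcnt
  -- the key disjointness fact for closures
  have clKey : ∀ i j, 1 ≤ i → 1 ≤ j → i ≠ j → ∀ t ∈ Set.Icc (0:ℝ) 1,
      γ t ∈ closure (D i) → γ t ∈ closure (D j) → False := by
    intro i j hi hj hij t ht hci hcj
    by_cases hDi : γ t ∈ D i
    · have hsubc : closure (D j) ⊆ (D i)ᶜ :=
        closure_minimal (fun y hy hyi => Set.disjoint_left.mp (hdisj i j hi hj hij) hyi hy)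
          (hopen i).isClosed_compl
      exact hsubc hcj hDi
    · by_cases hDj : γ t ∈ D j
      · have hsubc : closure (D i) ⊆ (D j)ᶜ :=
          closure_minimal (fun y hy hyj => Set.disjoint_left.mp (hdisj i j hi hj hij) hy hyj)
            (hopen j).isClosed_compl
        exact hsubc hci hDj
      · refine havoid t ht i j hij ⟨?_, ?_⟩
        · rw [(hopen i).frontier_eq]; exact ⟨hci, hDi⟩
        · rw [(hopen j).frontier_eq]; exact ⟨hcj, hDj⟩
  
  -- the residual preimage
  set F : Set ℝ := {t | t ∈ Set.Icc (0:ℝ) 1 ∧ ∀ i, 1 ≤ i → γ t ∉ D i} with hFdef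
  have hFsub : F ⊆ Set.Icc (0:ℝ) 1 := fun t ht => ht.1
  -- the intersection in the goal is the image of F
  have himg : γ '' Set.Icc 0 1 ∩
      (closure (D 0) \ ⋃ (i : ℕ) (_ : 1 ≤ i), D i) = γ '' F := by
    ext x
    constructor
    · rintro ⟨⟨t, ht, rfl⟩, -, hnot⟩
      exact ⟨t, ⟨ht, fun i hi hD => hnot (Set.mem_iUnion₂.mpr ⟨i, hi, hD⟩)⟩, rfl⟩
    · rintro ⟨t, ⟨ht, hF⟩, rfl⟩
      refine ⟨⟨t, ht, rfl⟩, subset_closure (hmaps ht), fun h => ?_⟩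
      obtain ⟨i, hi, hD⟩ := Set.mem_iUnion₂.mp h
      exact hF i hi hD
  rw [himg] at hcnt
  -- F is countable
  have hFc : F.Countable := by
    haveI := hcnt.to_subtype
    have hinj' : Function.Injective
        (fun t : F => (⟨γ t, Set.mem_image_of_mem γ t.2⟩ : γ '' F)) := by
      intro a b h
      exact Subtype.ext (hinj (hFsub a.2) (hFsub b.2) (congrArg Subtype.val h))
    exact Set.countable_coe_iff.mp hinj'.countable
  -- the closed pieces
  set K : ℕ → Set ℝ := fun i => {t | t ∈ Set.Icc (0:ℝ) 1 ∧ γ t ∈ closure (D i)} with hKdef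
  have hKcl : ∀ i, IsClosed (K i) := fun i =>
    hcont.preimage_isClosed_of_isClosed isClosed_Icc isClosed_closure
  have hKsub : ∀ i, K i ⊆ Set.Icc (0:ℝ) 1 := fun i t ht => ht.1
  have hKK : ∀ i j, 1 ≤ i → 1 ≤ j → i ≠ j → Disjoint (K i) (K j) := by
    intro i j hi hj hij
    rw [Set.disjoint_left]
    rintro t ⟨ht, hci⟩ ⟨-, hcj⟩
    exact clKey i j hi hj hij t ht hci hcj
  have hK0 : ∀ i, 1 ≤ i → (0:ℝ) ∈ K i → i = 1 := by
    intro i hi h0K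
    by_contra hne
    exact clKey i 1 hi le_rfl hne 0 ⟨le_refl 0, zero_le_one⟩ h0K.2 (subset_closure h0)
  have hK1 : ∀ i, 1 ≤ i → (1:ℝ) ∈ K i → i = 2 := by
    intro i hi h1K
    by_contra hne
    exact clKey i 2 hi (by norm_num) hne 1 ⟨zero_le_one, le_refl 1⟩ h1K.2 (subset_closure h1)
  -- the countable remainder
  set R : Set ℝ := {t | t ∈ F ∧ ∀ i, 1 ≤ i → γ t ∉ closure (D i)} with hRdef
  have hRc : R.Countable := hFc.mono fun t ht => ht.1
  have hRK : ∀ r ∈ R, ∀ i, 1 ≤ i → r ∉ K i := fun r hr i hi hK => hr.2 i hi hK.2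
  have hR0 : ∀ r ∈ R, r ≠ 0 := by
    rintro r hr rfl
    exact hr.1.2 1 le_rfl h0
  have hR1 : ∀ r ∈ R, r ≠ 1 := by
    rintro r hr rfl
    exact hr.1.2 2 (by norm_num) h1
  -- the partition of ℝ
  haveI := hRc.to_subtype
  set C : ℕ ⊕ ↥R → Set ℝ := fun a =>
    match a with
    | Sum.inl m => K (stmt19Idx m) ∪ stmt19Ray m
    | Sum.inr r => {(r : ℝ)} with hCdef
  have hRaysub : ∀ m t, t ∈ stmt19Ray m → t ∈ Set.Iic (0:ℝ) ∨ t ∈ Set.Ici (1:ℝ) := by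
    intro m t ht
    rcases m with _ | _ | m
    · exact Or.inl ht
    · exact Or.inr ht
    · exact absurd ht (Set.notMem_empty t)
  have hKRay : ∀ i m, 1 ≤ i → stmt19Idx m ≠ i → Disjoint (K i) (stmt19Ray m) := by
    intro i m hi hne
    rw [Set.disjoint_left]
    intro t htK htR
    rcases m with _ | _ | m
    · simp only [stmt19Ray, Set.mem_Iic] at htR
      have ht0 : t = 0 := le_antisymm htR htK.1.1
      exact hne ((hK0 i hi (ht0 ▸ htK)).symm)
    · simp only [stmt19Ray, Set.mem_Ici] at htR
      have ht1 : t = 1 := le_antisymm htK.1.2 htR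
      exact hne ((hK1 i hi (ht1 ▸ htK)).symm)
    · simp only [stmt19Ray] at htR
      exact htR
  have rayray : ∀ m m', m ≠ m' → Disjoint (stmt19Ray m) (stmt19Ray m') := by
    have hd : Disjoint (Set.Iic (0:ℝ)) (Set.Ici (1:ℝ)) := by
      rw [Set.disjoint_left]
      intro t ht ht'
      exact absurd (le_trans (Set.mem_Ici.mp ht') (Set.mem_Iic.mp ht)) (by norm_num)
    intro m m' h
    rcases m with _ | _ | m <;> rcases m' with _ | _ | m'
    · exact absurd rfl h
    · exact hd
    · simp [stmt19Ray]
    · exact hd.symm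
    · exact absurd rfl h
    · simp [stmt19Ray]
    · simp [stmt19Ray]
    · simp [stmt19Ray]
    · simp [stmt19Ray]
  have hRmem : ∀ r : ↥R, (r : ℝ) ∈ R := fun r => r.2
  have hcross : ∀ (m : ℕ) (r : ↥R), Disjoint (C (Sum.inl m)) (C (Sum.inr r)) := by
    intro m r
    rw [Set.disjoint_right]
    intro t htr htl
    have htr' : t = (r : ℝ) := Set.mem_singleton_iff.mp htr
    have htR : t ∈ R := htr' ▸ hRmem r
    rcases htl with hK | hRay
    · exact hRK t htR (stmt19Idx m) (stmt19Idx_pos m) hK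
    · rcases hRaysub m t hRay with h | h
      · exact hR0 t htR (le_antisymm (Set.mem_Iic.mp h) htR.1.1.1)
      · exact hR1 t htR (le_antisymm htR.1.1.2 (Set.mem_Ici.mp h))
  have hCdisj : Pairwise (Function.onFun Disjoint C) := by
    rintro (m | r) (m' | r') hab
    · have hmm : m ≠ m' := fun h => hab (congrArg Sum.inl h)
      show Disjoint (K (stmt19Idx m) ∪ stmt19Ray m) (K (stmt19Idx m') ∪ stmt19Ray m')
      rw [Set.disjoint_union_left]
      constructor
      · rw [Set.disjoint_union_right]
        exact ⟨hKK _ _ (stmt19Idx_pos m) (stmt19Idx_pos m') (fun h => hmm (stmt19Idx_inj h)),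
          hKRay _ _ (stmt19Idx_pos m) (fun h => hmm ((stmt19Idx_inj h).symm))⟩
      · rw [Set.disjoint_union_right]
        exact ⟨(hKRay _ _ (stmt19Idx_pos m') (fun h => hmm (stmt19Idx_inj h))).symm,
          rayray m m' hmm⟩
    · exact hcross m r'
    · exact (hcross m' r).symm
    · have hrr : (r : ℝ) ≠ (r' : ℝ) := fun h => hab (congrArg Sum.inr (Subtype.ext h))
      show Disjoint {(r : ℝ)} {(r' : ℝ)}
      exact Set.disjoint_singleton.mpr hrr
  have hCcl : ∀ a, IsClosed (C a) := by
    rintro (m | r)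
    · refine (hKcl _).union ?_
      rcases m with _ | _ | m
      · exact isClosed_Iic
      · exact isClosed_Ici
      · exact isClosed_empty
    · exact isClosed_singleton
  have hCcov : (⋃ a, C a) = Set.univ := by
    rw [Set.eq_univ_iff_forall]
    intro t
    rw [Set.mem_iUnion]
    rcases le_or_gt t 0 with ht0 | ht0
    · exact ⟨Sum.inl 0, Or.inr ht0⟩
    rcases le_or_gt 1 t with ht1 | ht1
    · exact ⟨Sum.inl 1, Or.inr ht1⟩
    have htI : t ∈ Set.Icc (0:ℝ) 1 := ⟨ht0.le, ht1.le⟩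
    by_cases hcl' : ∃ i, 1 ≤ i ∧ γ t ∈ closure (D i)
    · obtain ⟨i, hi, hci⟩ := hcl'
      obtain ⟨m, hm⟩ := stmt19Idx_surj hi
      exact ⟨Sum.inl m, Or.inl (by rw [hm]; exact ⟨htI, hci⟩)⟩
    · push_neg at hcl'
      have htR : t ∈ R :=
        ⟨⟨htI, fun i hi hD => hcl' i hi (subset_closure hD)⟩, fun i hi => hcl' i hi⟩
      exact ⟨Sum.inr ⟨t, htR⟩, rfl⟩
  exact sierpinski_real C hCcl hCdisj hCcov
    (i₀ := Sum.inl 0) (i₁ := Sum.inl 1) (by simp)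
    ⟨0, Or.inr (Set.mem_Iic.mpr (le_refl 0))⟩
    ⟨1, Or.inr (Set.mem_Ici.mpr (le_refl 1))⟩
end
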